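/- arXiv:1912.13154 — 5 statements merged into one kernel-verified Lean document; each statement's English description precedes it below -/
import Mathlib

section
/- Let η > 0 be a constant and let [0,T) be the maximal interval of existence of the system state x(t). Suppose the function approximation error f̃ : [0,T) → ℝ satisfies ∫₀ᵀ f̃(t)² dt ≤ C for a constant C independent of T, that the parameter estimate â(t) is bounded on [0,T) by a constant independent of T, and that f̃ is locally bounded in (x, â) uniformly in t. If s(t) = ∫₀ᵗ e^{−η(t−τ)} f̃(τ) dτ (i.e., s solves ṡ = −η s + f̃ with s(0) = 0), then sup_{t∈[0,T)} s(t)² ≤ (1/(2η)) ∫₀ᵀ f̃(τ)² dτ, this bound being independent of T; consequently x(t) remains bounded and exists for all t ≥ 0, â ∈ L∞, f̃ ∈ L², s ∈ L² ∩ L∞, s(t) → 0 as t → ∞, and x(t) → x_d(t). -/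
open MeasureTheory Filter
open scoped ENNReal

noncomputable section

/-- The signal `g` is square-integrable (`L²`) on `[0, ∞)`. -/
def InL2 {F : Type*} [NormedAddCommGroup F] (g : ℝ → F) : Prop :=
  ∫⁻ t in Set.Ici (0 : ℝ), ENNReal.ofReal (‖g t‖ ^ 2) < ⊤

/-- The signal `g` is bounded (`L∞`) on `[0, ∞)`. -/
def InLinf {F : Type*} [NormedAddCommGroup F] (g : ℝ → F) : Prop :=
  ∃ C : ℝ, ∀ t : ℝ, 0 ≤ t → ‖g t‖ ≤ C

/-! By Cauchy–Schwarz, `s(t)² ≤ (∫₀ᵗ e^{-2η(t-τ)} dτ) (∫₀ᵗ f̃²) ≤ (2η)⁻¹ ∫₀ᵀ f̃²`, a bound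
independent of `T`. So `s`, hence `x`, stays bounded on `[0, T)`, which excludes a finite escape
time: `T = ∞`. Splitting the kernel as `e^{-η(t-τ)/2} · e^{-η(t-τ)/2}` instead gives
`s(t)² ≤ η⁻¹ ∫₀ᵗ e^{-η(t-τ)} f̃²`, and integrating in `t` (Tonelli) gives `s ∈ L²`. Finally
`s(t) = e^{-ηt/2} s(t/2) + ∫_{t/2}^t e^{-η(t-τ)} f̃`, where the first term decays and the second
is controlled by the tail `∫_{t/2}^∞ f̃²`, so `s → 0`. -/

open Set Real
open scoped Topology

theorem ofReal_sq_eq_enorm_sq (y : ℝ) : ENNReal.ofReal (y ^ 2) = ‖y‖ₑ ^ 2 := by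
  rw [Real.enorm_eq_ofReal_abs, ← ENNReal.ofReal_pow (abs_nonneg y), sq_abs]

theorem abs_le_sqrt_of_ofReal_sq_le {y c : ℝ} (h : ENNReal.ofReal (y ^ 2) ≤ ENNReal.ofReal c) :
    |y| ≤ √c := by
  rcases ENNReal.ofReal_le_ofReal_iff'.1 h with h | h
  · exact Real.abs_le_sqrt h
  · rw [pow_eq_zero_iff two_ne_zero |>.1 (le_antisymm h (sq_nonneg y)), abs_zero]
    exact Real.sqrt_nonneg c

section SquareIntegrable

variable {α : Type*} [MeasurableSpace α] {μ : Measure α}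

theorem ofReal_sq_integral_mul_le {u v : α → ℝ} (hu : AEMeasurable u μ) (hv : AEMeasurable v μ) :
    ENNReal.ofReal ((∫ x, u x * v x ∂μ) ^ 2) ≤
      (∫⁻ x, ENNReal.ofReal (u x ^ 2) ∂μ) * ∫⁻ x, ENNReal.ofReal (v x ^ 2) ∂μ := by
  have hroot (y : ℝ) : ENNReal.ofReal (y ^ 2) ^ (1 / 2 : ℝ) = ‖y‖ₑ := by
    rw [ofReal_sq_eq_enorm_sq, ← ENNReal.rpow_natCast, ← ENNReal.rpow_mul]; norm_num
  have holder := ENNReal.lintegral_mul_norm_pow_le (μ := μ)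
    (hu.pow_const 2).ennreal_ofReal (hv.pow_const 2).ennreal_ofReal
    (p := 1 / 2) (q := 1 / 2) (by norm_num) (by norm_num) (by norm_num)
  simp only [hroot] at holder
  calc ENNReal.ofReal ((∫ x, u x * v x ∂μ) ^ 2) = ‖∫ x, u x * v x ∂μ‖ₑ ^ 2 :=
        ofReal_sq_eq_enorm_sq _
    _ ≤ (∫⁻ x, ‖u x‖ₑ * ‖v x‖ₑ ∂μ) ^ 2 := by
        gcongr
        simpa only [enorm_mul] using enorm_integral_le_lintegral_enorm (μ := μ) (fun x => u x * v x)
    _ ≤ ((∫⁻ x, ENNReal.ofReal (u x ^ 2) ∂μ) ^ (1 / 2 : ℝ) *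
          (∫⁻ x, ENNReal.ofReal (v x ^ 2) ∂μ) ^ (1 / 2 : ℝ)) ^ 2 := by gcongr
    _ = _ := by
        rw [mul_pow, ← ENNReal.rpow_natCast, ← ENNReal.rpow_natCast, ← ENNReal.rpow_mul,
          ← ENNReal.rpow_mul]; norm_num

theorem integrable_of_lintegral_sq_ne_top [IsFiniteMeasure μ] {f : α → ℝ}
    (hf : AEStronglyMeasurable f μ) (h : ∫⁻ x, ENNReal.ofReal (f x ^ 2) ∂μ ≠ ⊤) :
    Integrable f μ :=
  ((memLp_two_iff_integrable_sq hf).2 ⟨hf.pow 2,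
    (hasFiniteIntegral_iff_ofReal (ae_of_all _ fun x => sq_nonneg (f x))).2 h.lt_top⟩).integrable
    one_le_two

end SquareIntegrable

theorem tendsto_setLIntegral_Ioi_atTop {g : ℝ → ℝ≥0∞} {a₀ : ℝ} (h : ∫⁻ x in Ioi a₀, g x ≠ ⊤) :
    Tendsto (fun a => ∫⁻ x in Ioi a, g x) atTop (𝓝 0) := by
  have hIoi (a : ℝ) : volume.withDensity g (Ioi a) = ∫⁻ x in Ioi a, g x :=
    withDensity_apply _ measurableSet_Ioi
  have hempty : ⋂ a : ℝ, Ioi a = ∅ := iInter_eq_empty_iff.2 fun x => ⟨x, lt_irrefl x⟩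
  simpa only [hempty, measure_empty, Function.comp_def, hIoi] using
    tendsto_measure_iInter_atTop (μ := volume.withDensity g) (s := Ioi)
      (fun a => measurableSet_Ioi.nullMeasurableSet) (fun a b hab => Ioi_subset_Ioi hab)
      ⟨a₀, by rwa [hIoi]⟩

theorem lintegral_exp_neg_mul_sub_Iic {c : ℝ} (hc : 0 < c) (t : ℝ) :
    ∫⁻ τ in Iic t, ENNReal.ofReal (exp (-c * (t - τ))) = ENNReal.ofReal (1 / c) := by
  have hsplit (τ : ℝ) : exp (-c * (t - τ)) = exp (-c * t) * exp (c * τ) := by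
    rw [← exp_add]; ring_nf
  simp_rw [hsplit]
  rw [← ofReal_integral_eq_lintegral_ofReal ((integrableOn_exp_mul_Iic hc t).const_mul _)
    (ae_of_all _ fun τ => by positivity), integral_const_mul, integral_exp_mul_Iic hc,
    mul_div_assoc', ← exp_add]
  simp

theorem lintegral_exp_neg_mul_sub_Ici {c : ℝ} (hc : 0 < c) (τ : ℝ) :
    ∫⁻ t in Ici τ, ENNReal.ofReal (exp (-c * (t - τ))) = ENNReal.ofReal (1 / c) := by
  have hsplit (t : ℝ) : exp (-c * (t - τ)) = exp (c * τ) * exp (-c * t) := by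
    rw [← exp_add]; ring_nf
  simp_rw [hsplit]
  rw [← Measure.restrict_congr_set Ioi_ae_eq_Ici,
    ← ofReal_integral_eq_lintegral_ofReal
      ((integrableOn_exp_mul_Ioi (neg_neg_of_pos hc) τ).const_mul _)
      (ae_of_all _ fun t => by positivity), integral_const_mul,
    integral_exp_mul_Ioi (neg_neg_of_pos hc), mul_div_assoc', mul_neg, ← exp_add]
  field_simp
  simp

section ExpFilter

variable {η : ℝ} {f : ℝ → ℝ}

theorem integral_exp_mul_adjacent_intervals {a b c : ℝ} (hab : IntervalIntegrable f volume a b)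
    (hbc : IntervalIntegrable f volume b c) :
    ∫ τ in a..c, exp (-η * (c - τ)) * f τ =
      exp (-η * (c - b)) * (∫ τ in a..b, exp (-η * (b - τ)) * f τ) +
        ∫ τ in b..c, exp (-η * (c - τ)) * f τ := by
  rw [← intervalIntegral.integral_add_adjacent_intervals
    (hab.continuousOn_mul (by fun_prop)) (hbc.continuousOn_mul (by fun_prop)),
    ← intervalIntegral.integral_const_mul]
  congr 1
  refine intervalIntegral.integral_congr fun τ _ => ?_
  simp only [← mul_assoc, ← exp_add]
  ring_nf

theorem ofReal_sq_integral_exp_mul_le (hη : 0 < η) (hf : Measurable f) {a t : ℝ} (hat : a ≤ t) :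
    ENNReal.ofReal ((∫ τ in a..t, exp (-η * (t - τ)) * f τ) ^ 2) ≤
      ENNReal.ofReal (1 / (2 * η)) * ∫⁻ τ in Ioc a t, ENNReal.ofReal (f τ ^ 2) := by
  rw [intervalIntegral.integral_of_le hat]
  refine (ofReal_sq_integral_mul_le (by fun_prop) hf.aemeasurable).trans
    (mul_le_mul_left ?_ _)
  have hsq (τ : ℝ) : exp (-η * (t - τ)) ^ 2 = exp (-(2 * η) * (t - τ)) := by
    rw [← exp_nat_mul]; ring_nf
  simp_rw [hsq]
  calc ∫⁻ τ in Ioc a t, ENNReal.ofReal (exp (-(2 * η) * (t - τ)))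
      ≤ ∫⁻ τ in Iic t, ENNReal.ofReal (exp (-(2 * η) * (t - τ))) :=
        lintegral_mono_set Ioc_subset_Iic_self
    _ = ENNReal.ofReal (1 / (2 * η)) := lintegral_exp_neg_mul_sub_Iic (by positivity) t

theorem abs_integral_exp_mul_le (hη : 0 < η) (hf : Measurable f) {a t M : ℝ} (hat : a ≤ t)
    (hM : ∫⁻ τ in Ioc a t, ENNReal.ofReal (f τ ^ 2) ≤ ENNReal.ofReal M) :
    |∫ τ in a..t, exp (-η * (t - τ)) * f τ| ≤ √(1 / (2 * η) * M) := by
  refine abs_le_sqrt_of_ofReal_sq_le ((ofReal_sq_integral_exp_mul_le hη hf hat).trans ?_)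
  rw [ENNReal.ofReal_mul (by positivity)]
  exact mul_le_mul_right hM _

theorem ofReal_sq_integral_exp_mul_le_weighted (hη : 0 < η) (hf : Measurable f) {a t : ℝ}
    (hat : a ≤ t) :
    ENNReal.ofReal ((∫ τ in a..t, exp (-η * (t - τ)) * f τ) ^ 2) ≤
      ENNReal.ofReal (1 / η) *
        ∫⁻ τ in Ioc a t, ENNReal.ofReal (exp (-η * (t - τ))) * ENNReal.ofReal (f τ ^ 2) := by
  have hsq (τ : ℝ) : exp (-η * (t - τ) / 2) ^ 2 = exp (-η * (t - τ)) := by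
    rw [sq, ← exp_add, add_halves]
  have hcs := ofReal_sq_integral_mul_le (μ := volume.restrict (Ioc a t))
    (u := fun τ => exp (-η * (t - τ) / 2)) (v := fun τ => exp (-η * (t - τ) / 2) * f τ)
    (by fun_prop) (by fun_prop)
  simp only [← mul_assoc, ← exp_add, add_halves, mul_pow, hsq,
    ENNReal.ofReal_mul (exp_pos _).le] at hcs
  rw [intervalIntegral.integral_of_le hat]
  refine hcs.trans (mul_le_mul_left ?_ _)
  calc ∫⁻ τ in Ioc a t, ENNReal.ofReal (exp (-η * (t - τ)))
      ≤ ∫⁻ τ in Iic t, ENNReal.ofReal (exp (-η * (t - τ))) :=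
        lintegral_mono_set Ioc_subset_Iic_self
    _ = ENNReal.ofReal (1 / η) := lintegral_exp_neg_mul_sub_Iic hη t

theorem lintegral_lintegral_exp_mul_le (hη : 0 < η) {F : ℝ → ℝ≥0∞} (hF : Measurable F) :
    ∫⁻ t in Ici 0, ∫⁻ τ in Ioc 0 t, ENNReal.ofReal (exp (-η * (t - τ))) * F τ ≤
      ENNReal.ofReal (1 / η) * ∫⁻ τ in Ioi 0, F τ := by
  set G : ℝ → ℝ → ℝ≥0∞ := fun t τ => {p : ℝ × ℝ | p.2 ≤ p.1}.indicator
    (fun p => ENNReal.ofReal (exp (-η * (p.1 - p.2))) * F p.2) (t, τ)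
  have hG : Measurable (Function.uncurry G) :=
    (Measurable.mul (by fun_prop) (hF.comp measurable_snd)).indicator
      (measurableSet_le measurable_snd measurable_fst)
  calc ∫⁻ t in Ici 0, ∫⁻ τ in Ioc 0 t, ENNReal.ofReal (exp (-η * (t - τ))) * F τ
      ≤ ∫⁻ t, ∫⁻ τ in Ioc 0 t, ENNReal.ofReal (exp (-η * (t - τ))) * F τ :=
        setLIntegral_le_lintegral _ _
    _ = ∫⁻ t, ∫⁻ τ in Ioi 0, G t τ := by
        refine lintegral_congr fun t => ?_
        rw [← Ioi_inter_Iic, inter_comm, ← Measure.restrict_restrict measurableSet_Iic,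
          ← lintegral_indicator measurableSet_Iic]
        rfl
    _ = ∫⁻ τ in Ioi 0, ∫⁻ t, G t τ := lintegral_lintegral_swap hG.aemeasurable
    _ = ∫⁻ τ in Ioi 0, ENNReal.ofReal (1 / η) * F τ := by
        refine lintegral_congr fun τ => ?_
        change ∫⁻ t, (Ici τ).indicator (fun t => ENNReal.ofReal (exp (-η * (t - τ))) * F τ) t = _
        rw [lintegral_indicator measurableSet_Ici, lintegral_mul_const _ (by fun_prop),
          lintegral_exp_neg_mul_sub_Ici hη]
    _ = _ := lintegral_const_mul _ hF

theorem lintegral_sq_integral_exp_mul_le (hη : 0 < η) (hf : Measurable f) :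
    ∫⁻ t in Ici 0, ENNReal.ofReal ((∫ τ in 0..t, exp (-η * (t - τ)) * f τ) ^ 2) ≤
      ENNReal.ofReal (1 / η) * (ENNReal.ofReal (1 / η) * ∫⁻ τ in Ioi 0, ENNReal.ofReal (f τ ^ 2)) :=
  calc _ ≤ ∫⁻ t in Ici 0, ENNReal.ofReal (1 / η) *
          ∫⁻ τ in Ioc 0 t, ENNReal.ofReal (exp (-η * (t - τ))) * ENNReal.ofReal (f τ ^ 2) :=
        setLIntegral_mono' measurableSet_Ici fun t ht =>
          ofReal_sq_integral_exp_mul_le_weighted hη hf ht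
    _ = ENNReal.ofReal (1 / η) * ∫⁻ t in Ici 0,
          ∫⁻ τ in Ioc 0 t, ENNReal.ofReal (exp (-η * (t - τ))) * ENNReal.ofReal (f τ ^ 2) :=
        lintegral_const_mul' _ _ ENNReal.ofReal_ne_top
    _ ≤ _ := mul_le_mul_right (lintegral_lintegral_exp_mul_le hη (by fun_prop)) _

theorem intervalIntegrable_of_lintegral_sq_ne_top (hf : Measurable f)
    (hf2 : ∫⁻ τ in Ioi 0, ENNReal.ofReal (f τ ^ 2) ≠ ⊤) {a b : ℝ} (ha : 0 ≤ a) (hab : a ≤ b) :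
    IntervalIntegrable f volume a b :=
  (intervalIntegrable_iff_integrableOn_Ioc_of_le hab).2 <|
    integrable_of_lintegral_sq_ne_top hf.aestronglyMeasurable <|
      ne_top_of_le_ne_top hf2 <| lintegral_mono_set fun _ hτ => ha.trans_lt hτ.1

theorem tendsto_integral_exp_mul_atTop (hη : 0 < η) (hf : Measurable f)
    (hf2 : ∫⁻ τ in Ioi 0, ENNReal.ofReal (f τ ^ 2) ≠ ⊤) :
    Tendsto (fun t => ∫ τ in 0..t, exp (-η * (t - τ)) * f τ) atTop (𝓝 0) := by
  set tail : ℝ → ℝ := fun a => (∫⁻ τ in Ioi a, ENNReal.ofReal (f τ ^ 2)).toReal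
  set B := √(1 / (2 * η) * tail 0)
  have htail : ∀ a, 0 ≤ a → ∫⁻ τ in Ioi a, ENNReal.ofReal (f τ ^ 2) ≠ ⊤ := fun a ha =>
    ne_top_of_le_ne_top hf2 (lintegral_mono_set (Ioi_subset_Ioi ha))
  have hbound : ∀ a t, 0 ≤ a → a ≤ t → ∫⁻ τ in Ioc a t, ENNReal.ofReal (f τ ^ 2) ≤
      ENNReal.ofReal (tail a) := fun a t ha _ => by
    rw [ENNReal.ofReal_toReal (htail a ha)]
    exact lintegral_mono_set Ioc_subset_Ioi_self
  have hsplit : ∀ t, 0 ≤ t → |∫ τ in 0..t, exp (-η * (t - τ)) * f τ| ≤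
      exp (-η * (t - t / 2)) * B + √(1 / (2 * η) * tail (t / 2)) := fun t ht => by
    have h2 : 0 ≤ t / 2 := by positivity
    have h2t : t / 2 ≤ t := by linarith
    rw [integral_exp_mul_adjacent_intervals
      (intervalIntegrable_of_lintegral_sq_ne_top hf hf2 le_rfl h2)
      (intervalIntegrable_of_lintegral_sq_ne_top hf hf2 h2 h2t)]
    refine (abs_add_le _ _).trans (add_le_add ?_
      (abs_integral_exp_mul_le hη hf h2t (hbound _ _ h2 h2t)))
    rw [abs_mul, abs_of_pos (exp_pos _)]
    exact mul_le_mul_of_nonneg_left (abs_integral_exp_mul_le hη hf h2 (hbound _ _ le_rfl h2))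
      (exp_pos _).le
  have hdecay : Tendsto (fun t => exp (-η * (t - t / 2))) atTop (𝓝 0) :=
    tendsto_exp_atBot.comp <| Tendsto.const_mul_atTop_of_neg (neg_neg_of_pos hη) <|
      (tendsto_id.atTop_div_const two_pos).congr fun t => by simp only [id]; ring
  have htail0 : Tendsto (fun t => tail (t / 2)) atTop (𝓝 0) := by
    rw [← ENNReal.toReal_zero]
    exact (ENNReal.tendsto_toReal ENNReal.zero_ne_top).comp
      ((tendsto_setLIntegral_Ioi_atTop hf2).comp (tendsto_id.atTop_div_const two_pos))
  refine squeeze_zero_norm' (eventually_ge_atTop 0 |>.mono hsplit) ?_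
  simpa using (hdecay.mul_const B).add ((htail0.const_mul (1 / (2 * η))).sqrt)

end ExpFilter

theorem convergence_lemma_general
    {n p : ℕ}
    (x xd : ℝ → EuclideanSpace ℝ (Fin n))
    (ahat : ℝ → EuclideanSpace ℝ (Fin p))
    (s ftil : ℝ → ℝ)
    (η C : ℝ) (hη : 0 < η)
    -- [0, T) is the maximal interval of existence of x
    (T : ℝ≥0∞)
    (hmeas : Measurable ftil)
    -- ∫₀ᵀ f̃² ≤ C, with C independent of T
    (hL2 : (∫⁻ t in {t : ℝ | 0 ≤ t ∧ ENNReal.ofReal t < T},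
      ENNReal.ofReal (ftil t ^ 2)) ≤ ENNReal.ofReal C)
    -- â is bounded on [0, T)
    (hahat : ∃ B : ℝ, ∀ t, 0 ≤ t → ENNReal.ofReal t < T → ‖ahat t‖ ≤ B)
    -- s solves ṡ = -η s + f̃ with s(0) = 0, i.e. s(t) = ∫₀ᵗ e^{-η(t-τ)} f̃(τ) dτ
    (hsdef : ∀ t, 0 ≤ t →
      s t = ∫ τ in (0:ℝ)..t, Real.exp (-η * (t - τ)) * ftil τ)
    -- boundedness of s implies boundedness of x
    (hsx : ∀ B : ℝ, (∀ t, 0 ≤ t → ENNReal.ofReal t < T → |s t| ≤ B) →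
      ∃ B' : ℝ, ∀ t, 0 ≤ t → ENNReal.ofReal t < T → ‖x t‖ ≤ B')
    -- maximality: if T < ∞ then x escapes every bound before T
    (hmax : T ≠ ⊤ → ∀ B : ℝ, ∃ t : ℝ, 0 ≤ t ∧ ENNReal.ofReal t < T ∧ B ≤ ‖x t‖)
    -- s → 0 implies x → x_d
    (hxd : Tendsto s atTop (nhds 0) →
      Tendsto (fun t => x t - xd t) atTop (nhds 0)) :
    -- sup_{t ∈ [0,T)} s(t)² ≤ (1/(2η)) ∫₀ᵀ f̃(τ)² dτ
    (∀ t, 0 ≤ t → ENNReal.ofReal t < T →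
      ENNReal.ofReal (s t ^ 2) ≤ ENNReal.ofReal (1 / (2 * η)) *
        ∫⁻ τ in {τ : ℝ | 0 ≤ τ ∧ ENNReal.ofReal τ < T},
          ENNReal.ofReal (ftil τ ^ 2)) ∧
    -- x exists for all t ≥ 0 and remains bounded
    T = ⊤ ∧ InLinf x ∧
    InLinf ahat ∧ InL2 ftil ∧ (InL2 s ∧ InLinf s) ∧
    Tendsto s atTop (nhds 0) ∧
    Tendsto (fun t => x t - xd t) atTop (nhds 0) := by
  have hwindow : ∀ t, ENNReal.ofReal t < T → Ioc 0 t ⊆ {τ : ℝ | 0 ≤ τ ∧ ENNReal.ofReal τ < T} :=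
    fun t htT τ hτ => ⟨hτ.1.le, (ENNReal.ofReal_le_ofReal hτ.2).trans_lt htT⟩
  have hs_sq : ∀ t, 0 ≤ t → ENNReal.ofReal t < T →
      ENNReal.ofReal (s t ^ 2) ≤ ENNReal.ofReal (1 / (2 * η)) *
        ∫⁻ τ in {τ : ℝ | 0 ≤ τ ∧ ENNReal.ofReal τ < T}, ENNReal.ofReal (ftil τ ^ 2) :=
    fun t ht htT => hsdef t ht ▸ (ofReal_sq_integral_exp_mul_le hη hmeas ht).trans
      (mul_le_mul_right (lintegral_mono_set (hwindow t htT)) _)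
  have hs_bdd : ∀ t, 0 ≤ t → ENNReal.ofReal t < T → |s t| ≤ √(1 / (2 * η) * C) :=
    fun t ht htT => hsdef t ht ▸ abs_integral_exp_mul_le hη hmeas ht
      ((lintegral_mono_set (hwindow t htT)).trans hL2)
  obtain ⟨Bx, hBx⟩ := hsx _ hs_bdd
  have hT : T = ⊤ := by
    by_contra hT
    obtain ⟨t, ht, htT, hxt⟩ := hmax hT (Bx + 1)
    linarith [hBx t ht htT]
  subst hT
  simp only [ENNReal.ofReal_lt_top, and_true] at hL2
  have hf2 : ∫⁻ τ in Ioi 0, ENNReal.ofReal (ftil τ ^ 2) ≠ ⊤ :=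
    ne_top_of_le_ne_top (hL2.trans_lt ENNReal.ofReal_lt_top).ne
      (lintegral_mono_set Ioi_subset_Ici_self)
  have hs0 : Tendsto s atTop (𝓝 0) :=
    (tendsto_integral_exp_mul_atTop hη hmeas hf2).congr'
      (eventually_ge_atTop 0 |>.mono fun t ht => (hsdef t ht).symm)
  obtain ⟨Ba, hBa⟩ := hahat
  refine ⟨hs_sq, rfl, ⟨Bx, fun t ht => hBx t ht ENNReal.ofReal_lt_top⟩,
    ⟨Ba, fun t ht => hBa t ht ENNReal.ofReal_lt_top⟩, ?_, ⟨?_, ?_⟩, hs0, hxd hs0⟩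
  · simp only [InL2, Real.norm_eq_abs, sq_abs]
    exact hL2.trans_lt ENNReal.ofReal_lt_top
  · simp only [InL2, Real.norm_eq_abs, sq_abs]
    rw [setLIntegral_congr_fun measurableSet_Ici fun t ht => by rw [hsdef t ht]]
    exact (lintegral_sq_integral_exp_mul_le hη hmeas).trans_lt (by finiteness)
  · exact ⟨_, fun t ht => (Real.norm_eq_abs _).trans_le (hs_bdd t ht ENNReal.ofReal_lt_top)⟩

/-- convergence lemma.  If on the maximal interval of existence
`[0, T)` of the state `x` the function approximation error `f̃` satisfies
`∫₀ᵀ f̃² ≤ C`, the parameter estimate `â` is bounded, `f̃` is locally bounded in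
`(x, â)` uniformly in `t`, and `s(t) = ∫₀ᵗ e^{-η(t-τ)} f̃(τ) dτ`, then
`sup_{[0,T)} s² ≤ (1/(2η)) ∫₀ᵀ f̃²`; consequently `x` remains bounded and exists for
all `t ≥ 0` (`T = ∞`), `â ∈ L∞`, `f̃ ∈ L²`, `s ∈ L² ∩ L∞`, `s → 0` and `x → x_d`. -/
theorem convergence_lemma
    {n p : ℕ}
    (x xd : ℝ → EuclideanSpace ℝ (Fin n))
    (ahat : ℝ → EuclideanSpace ℝ (Fin p))
    (s ftil : ℝ → ℝ)
    (η C : ℝ) (hη : 0 < η)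
    -- [0, T) is the maximal interval of existence of x
    (T : ℝ≥0∞) (hT : 0 < T)
    (hmeas : Measurable ftil)
    -- ∫₀ᵀ f̃² ≤ C, with C independent of T
    (hL2 : (∫⁻ t in {t : ℝ | 0 ≤ t ∧ ENNReal.ofReal t < T},
      ENNReal.ofReal (ftil t ^ 2)) ≤ ENNReal.ofReal C)
    -- â is bounded on [0, T)
    (hahat : ∃ B : ℝ, ∀ t, 0 ≤ t → ENNReal.ofReal t < T → ‖ahat t‖ ≤ B)
    -- f̃ is locally bounded in (x, â) uniformly in t
    (hloc : ∀ R : ℝ, ∃ M : ℝ, ∀ t, 0 ≤ t → ENNReal.ofReal t < T →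
      ‖x t‖ ≤ R → ‖ahat t‖ ≤ R → |ftil t| ≤ M)
    -- s solves ṡ = -η s + f̃ with s(0) = 0, i.e. s(t) = ∫₀ᵗ e^{-η(t-τ)} f̃(τ) dτ
    (hsdef : ∀ t, 0 ≤ t →
      s t = ∫ τ in (0:ℝ)..t, Real.exp (-η * (t - τ)) * ftil τ)
    -- boundedness of s implies boundedness of x
    (hsx : ∀ B : ℝ, (∀ t, 0 ≤ t → ENNReal.ofReal t < T → |s t| ≤ B) →
      ∃ B' : ℝ, ∀ t, 0 ≤ t → ENNReal.ofReal t < T → ‖x t‖ ≤ B')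
    -- maximality: if T < ∞ then x escapes every bound before T
    (hmax : T ≠ ⊤ → ∀ B : ℝ, ∃ t : ℝ, 0 ≤ t ∧ ENNReal.ofReal t < T ∧ B ≤ ‖x t‖)
    -- s → 0 implies x → x_d
    (hxd : Tendsto s atTop (nhds 0) →
      Tendsto (fun t => x t - xd t) atTop (nhds 0)) :
    -- sup_{t ∈ [0,T)} s(t)² ≤ (1/(2η)) ∫₀ᵀ f̃(τ)² dτ
    (∀ t, 0 ≤ t → ENNReal.ofReal t < T →
      ENNReal.ofReal (s t ^ 2) ≤ ENNReal.ofReal (1 / (2 * η)) *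
        ∫⁻ τ in {τ : ℝ | 0 ≤ τ ∧ ENNReal.ofReal τ < T},
          ENNReal.ofReal (ftil τ ^ 2)) ∧
    -- x exists for all t ≥ 0 and remains bounded
    T = ⊤ ∧ InLinf x ∧
    InLinf ahat ∧ InL2 ftil ∧ (InL2 s ∧ InLinf s) ∧
    Tendsto s atTop (nhds 0) ∧
    Tendsto (fun t => x t - xd t) atTop (nhds 0) :=
  convergence_lemma_general x xd ahat s ftil η C hη T hmeas hL2 hahat hsdef hsx hmax hxd
end
end

section
/- Consider a linearly parameterized dynamics f(x, θ, t) = Y(x, t) θ with known regressor row vector Y(x, t) ∈ ℝ^{1×p} and true parameter a ∈ ℝᵖ, and the natural gradient adaptation law (d/dt) ∇ψ(â(t)) = −Y(x(t), t)ᵀ s(t) (equivalently â̇ = −[∇²ψ(â)]⁻¹ Yᵀ s), where ψ : ℝᵖ → ℝ is strictly convex with continuous gradient. Let A = {θ ∈ ℝᵖ : Y(x(t), t) θ = Y(x(t), t) a for all t ≥ 0}. If â(t) → â_∞ with â_∞ ∈ A as t → ∞, then â_∞ is the unique minimizer over A of θ ↦ d_ψ(θ, â(0)); i.e., â_∞ =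 argmin_{θ∈A} d_ψ(θ, â(0)). In particular, if â(0) = argmin_{θ∈ℝᵖ} ψ(θ), then â_∞ = argmin_{θ∈A} ψ(θ). -/
open MeasureTheory Filter
open scoped RealInnerProductSpace ENNReal

noncomputable section

/-- The Bregman divergence `d_ψ(y, x) = ψ(y) - ψ(x) - ∇ψ(x)ᵀ(y - x)` associated with a
differentiable convex potential `ψ` with gradient `gradψ`. -/
def bregman {p : ℕ} (ψ : EuclideanSpace ℝ (Fin p) → ℝ)
    (gradψ : EuclideanSpace ℝ (Fin p) → EuclideanSpace ℝ (Fin p))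
    (y x : EuclideanSpace ℝ (Fin p)) : ℝ :=
  ψ y - ψ x - ⟪gradψ x, y - x⟫

/-!
The adaptation law moves `∇ψ(â(t))` only along the regressors `Y(t)`, so for every `θ ∈ A`
the pairing `⟪∇ψ(â(t)), θ - â_∞⟫` is conserved. Passing to the limit in the subgradient
inequality of the convex `ψ` gives `⟪∇ψ(â_∞) - ∇ψ(â(0)), θ - â_∞⟫ = 0`, which is exactly the
Bregman Pythagorean identity `d(θ, â(0)) = d(â_∞, â(0)) + d(θ, â_∞)`; strict convexity makes the
last term positive for `θ ≠ â_∞`. If `â(0)` minimizes `ψ`, then `∇ψ(â(0)) = 0` and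
`d(·, â(0)) = ψ - ψ(â(0))`.
-/

open Set Topology

section FirstOrder

variable {E : Type*} [NormedAddCommGroup E] [InnerProductSpace ℝ E] [CompleteSpace E]
  {f : E → ℝ} {g x : E}

theorem ConvexOn.inner_gradient_le_sub (hf : ConvexOn ℝ univ f) (hg : HasGradientAt f g x)
    (y : E) : ⟪g, y - x⟫ ≤ f y - f x := by
  have hd : HasDerivAt (fun r : ℝ => f (AffineMap.lineMap x y r)) ⟪g, y - x⟫ 0 := by
    have hg' : HasFDerivAt f (InnerProductSpace.toDual ℝ E g)
        (AffineMap.lineMap x y (0 : ℝ)) := by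
      simpa using hg.hasFDerivAt
    exact hg'.comp_hasDerivAt (0 : ℝ) AffineMap.hasDerivAt_lineMap
  simpa [slope_def_field] using
    (hf.comp_affineMap (AffineMap.lineMap x y)).le_slope_of_hasDerivAt (mem_univ 0)
      (mem_univ 1) one_pos hd

theorem StrictConvexOn.inner_gradient_lt_sub (hf : StrictConvexOn ℝ univ f)
    (hg : HasGradientAt f g x) {y : E} (hne : y ≠ x) : ⟪g, y - x⟫ < f y - f x := by
  set m : E := (1 / 2 : ℝ) • x + (1 / 2 : ℝ) • y
  have hmid : f m < (1 / 2 : ℝ) * f x + (1 / 2 : ℝ) * f y :=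
    hf.2 (mem_univ x) (mem_univ y) hne.symm (by norm_num) (by norm_num) (by norm_num)
  have hm : ⟪g, m - x⟫ = (1 / 2 : ℝ) * ⟪g, y - x⟫ := by
    rw [← real_inner_smul_right]
    congr 1
    module
  linarith [hf.convexOn.inner_gradient_le_sub hg m]

theorem HasGradientAt.inner_eq_of_forall_mul_le (hg : HasGradientAt f g x) {u : E} {C : ℝ}
    (h : ∀ r : ℝ, r * C ≤ f (x + r • u) - f x) : ⟪g, u⟫ = C := by
  have hd : HasDerivAt (fun r : ℝ => f (x + r • u) - r * C) (⟪g, u⟫ - C) 0 := by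
    have hg' : HasFDerivAt f (InnerProductSpace.toDual ℝ E g) (x + (0 : ℝ) • u) := by
      simpa using hg.hasFDerivAt
    have hline : HasDerivAt (fun r : ℝ => x + r • u) u 0 := by
      simpa using ((hasDerivAt_id (0 : ℝ)).smul_const u).const_add x
    exact (hg'.comp_hasDerivAt (0 : ℝ) hline).sub (hasDerivAt_mul_const C)
  have hmin : IsLocalMin (fun r : ℝ => f (x + r • u) - r * C) 0 :=
    Filter.Eventually.of_forall fun r => by
      simp only [zero_smul, add_zero, zero_mul, sub_zero]
      linarith [h r]
  linarith [hmin.hasDerivAt_eq_zero hd]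

theorem HasGradientAt.eq_zero_of_forall_le (hg : HasGradientAt f g x) (hmin : ∀ y, f x ≤ f y) :
    g = 0 := by
  have hlocal : IsLocalMin f x := Filter.Eventually.of_forall hmin
  simpa using hlocal.hasFDerivAt_eq_zero hg.hasFDerivAt

/-- The subgradient inequality at `z i` passes to the limit, which replaces continuity of the
gradient. -/
theorem ConvexOn.inner_gradient_eq_of_tendsto {ι : Type*} {l : Filter ι} [l.NeBot]
    {grad : E → E} (hf : ConvexOn ℝ univ f) (hgrad : ∀ y, HasGradientAt f (grad y) y)
    {z : ι → E} (hz : Tendsto z l (𝓝 x)) {u : E} {C : ℝ}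
    (hC : ∀ᶠ i in l, ⟪grad (z i), u⟫ = C) : ⟪grad x, u⟫ = C := by
  have hcont : Continuous f :=
    continuous_iff_continuousAt.2 fun y => (hgrad y).differentiableAt.continuousAt
  refine (hgrad x).inner_eq_of_forall_mul_le fun r => ?_
  refine ge_of_tendsto
    (((hcont.tendsto _).comp (hz.add_const _)).sub ((hcont.tendsto _).comp hz)) ?_
  filter_upwards [hC] with i hi
  have := hf.inner_gradient_le_sub (hgrad (z i)) (z i + r • u)
  rw [add_sub_cancel_left, real_inner_smul_right, hi] at this
  show r * C ≤ f (z i + r • u) - f (z i)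
  linarith

end FirstOrder

theorem inner_eq_of_hasDerivAt_of_inner_eq_zero {F : Type*} [NormedAddCommGroup F]
    [InnerProductSpace ℝ F] {γ γ' : ℝ → F} {u : F}
    (hγ : ∀ t, 0 ≤ t → HasDerivAt γ (γ' t) t) (hu : ∀ t, 0 ≤ t → ⟪γ' t, u⟫ = 0)
    {T : ℝ} (hT : 0 ≤ T) : ⟪γ T, u⟫ = ⟪γ 0, u⟫ := by
  have hd : ∀ t, 0 ≤ t → HasDerivAt (fun τ => ⟪γ τ, u⟫) 0 t := fun t ht => by
    simpa [hu t ht] using (hγ t ht).inner ℝ (hasDerivAt_const t u)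
  exact constant_of_has_deriv_right_zero
    (fun t ht => (hd t ht.1).continuousAt.continuousWithinAt)
    (fun t ht => (hd t ht.1).hasDerivWithinAt) T ⟨hT, le_rfl⟩

section Bregman

variable {p : ℕ} {ψ : EuclideanSpace ℝ (Fin p) → ℝ}
  {gradψ : EuclideanSpace ℝ (Fin p) → EuclideanSpace ℝ (Fin p)}
  {x y z : EuclideanSpace ℝ (Fin p)}

theorem bregman_nonneg (hψ : ConvexOn ℝ univ ψ) (hg : HasGradientAt ψ (gradψ x) x) :
    0 ≤ bregman ψ gradψ y x := by
  unfold bregman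
  linarith [hψ.inner_gradient_le_sub hg y]

theorem bregman_pos (hψ : StrictConvexOn ℝ univ ψ) (hg : HasGradientAt ψ (gradψ x) x)
    (hne : y ≠ x) : 0 < bregman ψ gradψ y x := by
  unfold bregman
  linarith [hψ.inner_gradient_lt_sub hg hne]

theorem bregman_of_gradient_eq_zero (h : gradψ x = 0) : bregman ψ gradψ y x = ψ y - ψ x := by
  simp [bregman, h]

theorem bregman_eq_add_of_inner_eq (h : ⟪gradψ x, y - x⟫ = ⟪gradψ z, y - x⟫) :
    bregman ψ gradψ y z = bregman ψ gradψ x z + bregman ψ gradψ y x := by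
  have hsplit : ⟪gradψ z, y - z⟫ = ⟪gradψ z, x - z⟫ + ⟪gradψ z, y - x⟫ := by
    rw [← inner_add_right, sub_add_sub_cancel']
  unfold bregman
  linarith

end Bregman

theorem implicit_regularization_linear_general
    {p : ℕ}
    (ψ : EuclideanSpace ℝ (Fin p) → ℝ)
    (gradψ : EuclideanSpace ℝ (Fin p) → EuclideanSpace ℝ (Fin p))
    (Y : ℝ → EuclideanSpace ℝ (Fin p))
    (a ainf : EuclideanSpace ℝ (Fin p))
    (ahat : ℝ → EuclideanSpace ℝ (Fin p))
    (s : ℝ → ℝ)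
    -- ψ is strictly convex with (continuous) gradient gradψ
    (hgrad : ∀ θ, HasGradientAt ψ (gradψ θ) θ)
    (hconv : StrictConvexOn ℝ Set.univ ψ)
    -- natural gradient adaptation law: (d/dt) ∇ψ(â(t)) = -Y(t)ᵀ s(t)
    (hlaw : ∀ t, 0 ≤ t →
      HasDerivAt (fun τ => gradψ (ahat τ)) (-(s t • Y t)) t)
    -- â(t) → â_∞ and â_∞ interpolates: â_∞ ∈ A
    (hlim : Tendsto ahat atTop (nhds ainf))
    (hmem : ∀ t, 0 ≤ t → ⟪Y t, ainf⟫ = ⟪Y t, a⟫) :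
    -- â_∞ is the unique minimizer over A of the Bregman divergence to â(0)
    ((∀ θ, (∀ t, 0 ≤ t → ⟪Y t, θ⟫ = ⟪Y t, a⟫) →
        bregman ψ gradψ ainf (ahat 0) ≤ bregman ψ gradψ θ (ahat 0)) ∧
      (∀ θ, (∀ t, 0 ≤ t → ⟪Y t, θ⟫ = ⟪Y t, a⟫) → θ ≠ ainf →
        bregman ψ gradψ ainf (ahat 0) < bregman ψ gradψ θ (ahat 0))) ∧
    -- in particular, if â(0) minimizes ψ globally, â_∞ uniquely minimizes ψ over A
    ((∀ θ, ψ (ahat 0) ≤ ψ θ) →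
      (∀ θ, (∀ t, 0 ≤ t → ⟪Y t, θ⟫ = ⟪Y t, a⟫) →
        ψ ainf ≤ ψ θ ∧ (θ ≠ ainf → ψ ainf < ψ θ))) := by
  have hpythagoras : ∀ θ, (∀ t, 0 ≤ t → ⟪Y t, θ⟫ = ⟪Y t, a⟫) →
      bregman ψ gradψ θ (ahat 0) = bregman ψ gradψ ainf (ahat 0) + bregman ψ gradψ θ ainf := by
    intro θ hθ
    have horth : ∀ t, 0 ≤ t → ⟪-(s t • Y t), θ - ainf⟫ = 0 := fun t ht => by
      rw [inner_neg_left, real_inner_smul_left, inner_sub_right, hθ t ht, hmem t ht]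
      ring
    refine bregman_eq_add_of_inner_eq (hconv.convexOn.inner_gradient_eq_of_tendsto hgrad hlim ?_)
    filter_upwards [eventually_ge_atTop 0] with T hT
    exact inner_eq_of_hasDerivAt_of_inner_eq_zero hlaw horth hT
  refine ⟨⟨fun θ hθ => ?_, fun θ hθ hne => ?_⟩, fun hmin θ hθ => ?_⟩
  · linarith [hpythagoras θ hθ, bregman_nonneg (y := θ) hconv.convexOn (hgrad ainf)]
  · linarith [hpythagoras θ hθ, bregman_pos hconv (hgrad ainf) hne]
  · have hg0 := (hgrad (ahat 0)).eq_zero_of_forall_le hmin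
    have h := hpythagoras θ hθ
    simp only [bregman_of_gradient_eq_zero hg0] at h
    exact ⟨by linarith [bregman_nonneg (y := θ) hconv.convexOn (hgrad ainf)],
      fun hne => by linarith [bregman_pos hconv (hgrad ainf) hne]⟩

/-- implicit regularization of natural gradient adaptation, linearly
parameterized dynamics.  If the mirror-descent/natural-gradient adaptation law
`(d/dt) ∇ψ(â) = -Yᵀ s` converges to an interpolating parameter vector `â_∞ ∈ A`, then
`â_∞` is the unique minimizer over `A` of `θ ↦ d_ψ(θ, â(0))`; in particular, if `â(0)`
minimizes `ψ` globally, then `â_∞` uniquely minimizes `ψ` over `A`. -/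
theorem implicit_regularization_linear
    {p : ℕ}
    (ψ : EuclideanSpace ℝ (Fin p) → ℝ)
    (gradψ : EuclideanSpace ℝ (Fin p) → EuclideanSpace ℝ (Fin p))
    (Y : ℝ → EuclideanSpace ℝ (Fin p))
    (a ainf : EuclideanSpace ℝ (Fin p))
    (ahat : ℝ → EuclideanSpace ℝ (Fin p))
    (s : ℝ → ℝ)
    -- ψ is strictly convex with (continuous) gradient gradψ
    (hgrad : ∀ θ, HasGradientAt ψ (gradψ θ) θ)
    (hconv : StrictConvexOn ℝ Set.univ ψ)
    -- signals are continuous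
    (hconts : Continuous s) (hcontY : Continuous Y) (hconta : Continuous ahat)
    -- t ↦ s(t) Y(t)(â(t) - θ) is locally integrable for every θ
    (hloci : ∀ θ : EuclideanSpace ℝ (Fin p),
      LocallyIntegrableOn (fun t => s t * ⟪Y t, ahat t - θ⟫) (Set.Ici (0 : ℝ)))
    -- natural gradient adaptation law: (d/dt) ∇ψ(â(t)) = -Y(t)ᵀ s(t)
    (hlaw : ∀ t, 0 ≤ t →
      HasDerivAt (fun τ => gradψ (ahat τ)) (-(s t • Y t)) t)
    -- â(t) → â_∞ and â_∞ interpolates: â_∞ ∈ A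
    (hlim : Tendsto ahat atTop (nhds ainf))
    (hmem : ∀ t, 0 ≤ t → ⟪Y t, ainf⟫ = ⟪Y t, a⟫) :
    -- â_∞ is the unique minimizer over A of the Bregman divergence to â(0)
    ((∀ θ, (∀ t, 0 ≤ t → ⟪Y t, θ⟫ = ⟪Y t, a⟫) →
        bregman ψ gradψ ainf (ahat 0) ≤ bregman ψ gradψ θ (ahat 0)) ∧
      (∀ θ, (∀ t, 0 ≤ t → ⟪Y t, θ⟫ = ⟪Y t, a⟫) → θ ≠ ainf →
        bregman ψ gradψ ainf (ahat 0) < bregman ψ gradψ θ (ahat 0))) ∧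
    -- in particular, if â(0) minimizes ψ globally, â_∞ uniquely minimizes ψ over A
    ((∀ θ, ψ (ahat 0) ≤ ψ θ) →
      (∀ θ, (∀ t, 0 ≤ t → ⟪Y t, θ⟫ = ⟪Y t, a⟫) →
        ψ ainf ≤ ψ θ ∧ (θ ≠ ainf → ψ ainf < ψ θ))) :=
  implicit_regularization_linear_general ψ gradψ Y a ainf ahat s hgrad hconv hlaw hlim hmem

end
end

section
/- Consider a nonlinearly parameterized dynamics f(x, θ, t) with true parameter a ∈ ℝᵖ satisfying: (i) the monotonicity assumption with known function α(x, t) ∈ ℝᵖ and constant D₁ > 0 (namely (â − a)ᵀ α(x,t) (f(x,â,t) − f(x,a,t)) ≥ 0 and |α(x,t)ᵀ(â − a)| ≥ (1/D₁)|f(x,â,t) − f(x,a,t)| for all â, x, t), and (ii) for any θ, f(x(t), θ, t) = f(x(t), a, t) for all t implies α(x(t), t)ᵀθ = α(x(t), t)ᵀa for all t. Consider the adaptation law (d/dt) ∇ψ(â(t)) = −f̃(t) α(x(t), t) (equivalently â̇ = −[∇²ψ(â)]⁻¹ f̃ α), where f̃(t) = f(x(t), â(t), t) − f(x(t), a, t)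 and ψ : ℝᵖ → ℝ is strictly convex with continuous gradient. Let A = {θ ∈ ℝᵖ : f(x(t), θ, t) = f(x(t), a, t) for all t ≥ 0}. If â(t) → â_∞ with â_∞ ∈ A, then â_∞ is the unique minimizer over A of θ ↦ d_ψ(θ, â(0)). -/
/-!
By (ii), `α(x(t), t)` is orthogonal to `θ - â_∞` for every `θ ∈ A`, so the adaptation law keeps
`⟪∇ψ(â(t)), θ - â_∞⟫` constant, and
`d_ψ(θ, â(0)) - d_ψ(â_∞, â(0)) = ψ θ - ψ â_∞ - ⟪∇ψ(â(t)), θ - â_∞⟫` for every `t ≥ 0`.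
Since `∇ψ` need not be continuous, the limit `t → ∞` is taken after bounding the inner product
by the first-order convexity inequality
`⟪∇ψ(â(t)), θ - â_∞⟫ ≤ 2 (ψ(â(t) + (θ - â_∞)/2) - ψ(â(t)))`, whose right side converges.
This leaves the lower bound `ψ θ + ψ â_∞ - 2 ψ((θ + â_∞)/2)`, which is nonnegative by convexity
and positive for `θ ≠ â_∞` by strict convexity.
-/

open MeasureTheory Filter
open scoped RealInnerProductSpace ENNReal

noncomputable section

section ConvexGradient

variable {E : Type*} [NormedAddCommGroup E] [InnerProductSpace ℝ E] [CompleteSpace E]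
  {ψ : E → ℝ}

theorem ConvexOn.add_inner_le_of_hasGradientAt (hψ : ConvexOn ℝ Set.univ ψ) {g u : E}
    (hg : HasGradientAt ψ g u) (v : E) : ψ u + ⟪g, v - u⟫ ≤ ψ v := by
  set ℓ : ℝ →ᵃ[ℝ] E := AffineMap.lineMap u v
  have hline : ConvexOn ℝ Set.univ (ψ ∘ ℓ) := by
    simpa only [Set.preimage_univ] using hψ.comp_affineMap ℓ
  have hgℓ : HasFDerivAt ψ (InnerProductSpace.toDual ℝ E g) (ℓ 0) := by
    simpa only [ℓ, AffineMap.lineMap_apply_zero] using hg.hasFDerivAt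
  have hderiv : HasDerivAt (ψ ∘ ℓ) ⟪g, v - u⟫ 0 := by
    simpa only [InnerProductSpace.toDual_apply_apply] using
      hgℓ.comp_hasDerivAt 0 AffineMap.hasDerivAt_lineMap
  have hslope := hline.le_slope_of_hasDerivAt (Set.mem_univ 0) (Set.mem_univ 1) one_pos hderiv
  simp only [ℓ, slope_def_field, Function.comp_apply, AffineMap.lineMap_apply_one,
    AffineMap.lineMap_apply_zero, sub_zero, div_one] at hslope
  linarith

theorem ConvexOn.inner_le_sub_of_tendsto (hψ : ConvexOn ℝ Set.univ ψ) {ι : Type*}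
    {l : Filter ι} [l.NeBot] {g u : ι → E} {u₀ d : E} {c : ℝ}
    (hψu₀ : ContinuousAt ψ u₀) (hψd : ContinuousAt ψ (u₀ + d))
    (hg : ∀ᶠ i in l, HasGradientAt ψ (g i) (u i)) (hc : ∀ᶠ i in l, ⟪g i, d⟫ = c)
    (hu : Tendsto u l (nhds u₀)) : c ≤ ψ (u₀ + d) - ψ u₀ := by
  have hlim : Tendsto (fun i => ψ (u i + d) - ψ (u i)) l (nhds (ψ (u₀ + d) - ψ u₀)) :=
    (hψd.tendsto.comp (hu.add_const d)).sub (hψu₀.tendsto.comp hu)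
  refine ge_of_tendsto hlim ?_
  filter_upwards [hg, hc] with i hgi hci
  have := hψ.add_inner_le_of_hasGradientAt hgi (u i + d)
  rw [add_sub_cancel_left, hci] at this
  linarith

end ConvexGradient

theorem inner_eq_of_hasDerivAt_of_inner_eq_zero_s2 {F : Type*} [NormedAddCommGroup F]
    [InnerProductSpace ℝ F] {G G' : ℝ → F} {v : F} {a t : ℝ}
    (hG : ∀ s, a ≤ s → HasDerivAt G (G' s) s) (hv : ∀ s, a ≤ s → ⟪G' s, v⟫ = 0)
    (ht : a ≤ t) : ⟪G t, v⟫ = ⟪G a, v⟫ := by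
  have hderiv : ∀ s, a ≤ s → HasDerivAt (fun s => ⟪G s, v⟫) 0 s := fun s hs => by
    simpa [hv s hs] using (hG s hs).inner ℝ (hasDerivAt_const s v)
  exact constant_of_has_deriv_right_zero
    (fun s hs => (hderiv s hs.1).continuousAt.continuousWithinAt)
    (fun s hs => (hderiv s hs.1).hasDerivWithinAt) t ⟨ht, le_rfl⟩

theorem bregman_sub_bregman {p : ℕ} (ψ : EuclideanSpace ℝ (Fin p) → ℝ)
    (gradψ : EuclideanSpace ℝ (Fin p) → EuclideanSpace ℝ (Fin p))
    (θ w z : EuclideanSpace ℝ (Fin p)) :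
    bregman ψ gradψ θ z - bregman ψ gradψ w z = ψ θ - ψ w - ⟪gradψ z, θ - w⟫ := by
  simp only [bregman, inner_sub_right]
  ring

theorem implicit_regularization_nonlinear_general
    {n p : ℕ}
    (ψ : EuclideanSpace ℝ (Fin p) → ℝ)
    (gradψ : EuclideanSpace ℝ (Fin p) → EuclideanSpace ℝ (Fin p))
    (f : EuclideanSpace ℝ (Fin n) → EuclideanSpace ℝ (Fin p) → ℝ → ℝ)
    (α : EuclideanSpace ℝ (Fin n) → ℝ → EuclideanSpace ℝ (Fin p))
    (x : ℝ → EuclideanSpace ℝ (Fin n))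
    (a ainf : EuclideanSpace ℝ (Fin p))
    (ahat : ℝ → EuclideanSpace ℝ (Fin p))
    -- (ii) interpolation of f along the trajectory forces interpolation of αᵀθ
    (hinv : ∀ θ : EuclideanSpace ℝ (Fin p),
      (∀ t, 0 ≤ t → f (x t) θ t = f (x t) a t) →
      ∀ t, 0 ≤ t → ⟪α (x t) t, θ⟫ = ⟪α (x t) t, a⟫)
    -- ψ is strictly convex with gradient gradψ
    (hgrad : ∀ θ, HasGradientAt ψ (gradψ θ) θ)
    (hconv : StrictConvexOn ℝ Set.univ ψ)
    -- adaptation law (d/dt) ∇ψ(â(t)) = -f̃(t) α(x(t), t)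
    (hlaw : ∀ t, 0 ≤ t →
      HasDerivAt (fun τ => gradψ (ahat τ))
        (-((f (x t) (ahat t) t - f (x t) a t) • α (x t) t)) t)
    -- â(t) → â_∞ and â_∞ ∈ A
    (hlim : Tendsto ahat atTop (nhds ainf))
    (hmem : ∀ t, 0 ≤ t → f (x t) ainf t = f (x t) a t) :
    -- â_∞ is the unique minimizer over A of the Bregman divergence to â(0)
    (∀ θ, (∀ t, 0 ≤ t → f (x t) θ t = f (x t) a t) →
      bregman ψ gradψ ainf (ahat 0) ≤ bregman ψ gradψ θ (ahat 0)) ∧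
    (∀ θ, (∀ t, 0 ≤ t → f (x t) θ t = f (x t) a t) → θ ≠ ainf →
      bregman ψ gradψ ainf (ahat 0) < bregman ψ gradψ θ (ahat 0)) := by
  have hψ : Continuous ψ :=
    continuous_iff_continuousAt.2 fun u => (hgrad u).differentiableAt.continuousAt
  have key : ∀ θ, (∀ t, 0 ≤ t → f (x t) θ t = f (x t) a t) →
      ψ θ + ψ ainf - 2 * ψ ((1 / 2 : ℝ) • θ + (1 / 2 : ℝ) • ainf) ≤
        bregman ψ gradψ θ (ahat 0) - bregman ψ gradψ ainf (ahat 0) := by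
    intro θ hθ
    have hconserved : ∀ t, 0 ≤ t →
        ⟪gradψ (ahat t), (1 / 2 : ℝ) • (θ - ainf)⟫ = ⟪gradψ (ahat 0), (1 / 2 : ℝ) • (θ - ainf)⟫ :=
      fun t ht => inner_eq_of_hasDerivAt_of_inner_eq_zero_s2 hlaw (fun s hs => by
        rw [inner_neg_left, real_inner_smul_left, real_inner_smul_right, inner_sub_right,
          hinv θ hθ s hs, hinv ainf hmem s hs, sub_self, mul_zero, mul_zero, neg_zero]) ht
    have hmid : ainf + (1 / 2 : ℝ) • (θ - ainf) = (1 / 2 : ℝ) • θ + (1 / 2 : ℝ) • ainf := by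
      module
    have hbound := hconv.convexOn.inner_le_sub_of_tendsto hψ.continuousAt hψ.continuousAt
      (.of_forall fun t => hgrad (ahat t)) ((eventually_ge_atTop 0).mono hconserved) hlim
    rw [hmid, real_inner_smul_right] at hbound
    linarith [bregman_sub_bregman ψ gradψ θ ainf (ahat 0)]
  refine ⟨fun θ hθ => ?_, fun θ hθ hne => ?_⟩
  · have hcvx := hconv.convexOn.2 (Set.mem_univ θ) (Set.mem_univ ainf)
      one_half_pos.le one_half_pos.le (add_halves 1)
    simp only [smul_eq_mul] at hcvx
    linarith [key θ hθ]
  · have hcvx := hconv.2 (Set.mem_univ θ) (Set.mem_univ ainf) hne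
      one_half_pos one_half_pos (add_halves 1)
    simp only [smul_eq_mul] at hcvx
    linarith [key θ hθ]

/-- implicit regularization of natural gradient adaptation, nonlinearly
parameterized dynamics under the monotonicity assumption.  If the adaptation law
`(d/dt) ∇ψ(â) = -f̃ α(x, t)` converges to an interpolating parameter vector `â_∞ ∈ A`,
then `â_∞` is the unique minimizer over `A` of `θ ↦ d_ψ(θ, â(0))`. -/
theorem implicit_regularization_nonlinear
    {n p : ℕ}
    (ψ : EuclideanSpace ℝ (Fin p) → ℝ)
    (gradψ : EuclideanSpace ℝ (Fin p) → EuclideanSpace ℝ (Fin p))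
    (f : EuclideanSpace ℝ (Fin n) → EuclideanSpace ℝ (Fin p) → ℝ → ℝ)
    (α : EuclideanSpace ℝ (Fin n) → ℝ → EuclideanSpace ℝ (Fin p))
    (x : ℝ → EuclideanSpace ℝ (Fin n))
    (a ainf : EuclideanSpace ℝ (Fin p))
    (ahat : ℝ → EuclideanSpace ℝ (Fin p))
    (D₁ : ℝ) (hD₁ : 0 < D₁)
    -- (i) monotonicity assumption
    (hmono₁ : ∀ (b : EuclideanSpace ℝ (Fin p)) (ξ : EuclideanSpace ℝ (Fin n)) (t : ℝ),
      0 ≤ t → 0 ≤ ⟪b - a, α ξ t⟫ * (f ξ b t - f ξ a t))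
    (hmono₂ : ∀ (b : EuclideanSpace ℝ (Fin p)) (ξ : EuclideanSpace ℝ (Fin n)) (t : ℝ),
      0 ≤ t → (1 / D₁) * |f ξ b t - f ξ a t| ≤ |⟪α ξ t, b - a⟫|)
    -- (ii) interpolation of f along the trajectory forces interpolation of αᵀθ
    (hinv : ∀ θ : EuclideanSpace ℝ (Fin p),
      (∀ t, 0 ≤ t → f (x t) θ t = f (x t) a t) →
      ∀ t, 0 ≤ t → ⟪α (x t) t, θ⟫ = ⟪α (x t) t, a⟫)
    -- ψ is strictly convex with gradient gradψ
    (hgrad : ∀ θ, HasGradientAt ψ (gradψ θ) θ)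
    (hconv : StrictConvexOn ℝ Set.univ ψ)
    -- signals are continuous
    (hcontx : Continuous x) (hconta : Continuous ahat)
    -- t ↦ f̃(t) α(x(t), t)ᵀ(â(t) - θ) is locally integrable for every θ
    (hloci : ∀ θ : EuclideanSpace ℝ (Fin p),
      LocallyIntegrableOn
        (fun t => (f (x t) (ahat t) t - f (x t) a t) * ⟪α (x t) t, ahat t - θ⟫)
        (Set.Ici (0 : ℝ)))
    -- adaptation law (d/dt) ∇ψ(â(t)) = -f̃(t) α(x(t), t)
    (hlaw : ∀ t, 0 ≤ t →
      HasDerivAt (fun τ => gradψ (ahat τ))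
        (-((f (x t) (ahat t) t - f (x t) a t) • α (x t) t)) t)
    -- â(t) → â_∞ and â_∞ ∈ A
    (hlim : Tendsto ahat atTop (nhds ainf))
    (hmem : ∀ t, 0 ≤ t → f (x t) ainf t = f (x t) a t) :
    -- â_∞ is the unique minimizer over A of the Bregman divergence to â(0)
    (∀ θ, (∀ t, 0 ≤ t → f (x t) θ t = f (x t) a t) →
      bregman ψ gradψ ainf (ahat 0) ≤ bregman ψ gradψ θ (ahat 0)) ∧
    (∀ θ, (∀ t, 0 ≤ t → f (x t) θ t = f (x t) a t) → θ ≠ ainf →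
      bregman ψ gradψ ainf (ahat 0) < bregman ψ gradψ θ (ahat 0)) :=
  implicit_regularization_nonlinear_general ψ gradψ f α x a ainf ahat hinv hgrad hconv hlaw hlim
    hmem
end
end

section
/- Consider the linearly parameterized error dynamics ṡ(t) = −η s(t) + Y(t)(â(t) − a) with η > 0, Y(t) = Y(x(t), t) ∈ ℝ^{1×p}, together with the momentum adaptation law v̂̇ = −γ Y(t)ᵀ s, â̇ = β 𝒩(t)(v̂ − â), where 𝒩(t) = 1 + μ‖Y(t)‖², γ > 0, β > 0, and μ > γ/(η β). Then all trajectories (x, v̂, â) remain bounded, s ∈ L∞ ∩ L², (â − v̂) ∈ L², s(t) → 0 as t → ∞, and x(t) → x_d(t). -/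
/-!
With `e = â - v̂`, the function `V = γ s² + ‖v̂ - a‖² + ‖e‖²` is weighted so that the cross terms
`s ⟪Y, v̂ - a⟫` cancel, leaving `V̇ = -2γη s² + 4γ s ⟪Y, e⟫ - 2β (1 + μ‖Y‖²) ‖e‖²`.
Young's inequality lets the `μ‖Y‖²` damping absorb the cross term:
`V̇ ≤ -2γ (η - γ/(βμ)) s² - 2β ‖e‖²`, and `η - γ/(βμ) > 0` is exactly `μ > γ/(ηβ)`.
So `V` is nonincreasing, which bounds `s`, `v̂`, `â` (hence `x` and `Y`), and integrating `V̇`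
puts `s` and `e` in `L²`. Then `ṡ` is bounded, so `s²` is Lipschitz and integrable on `[0, ∞)`,
and Barbalat's lemma gives `s → 0`.
-/

open MeasureTheory Filter
open scoped RealInnerProductSpace ENNReal

noncomputable section

open Set Topology

section Signals

variable {F : Type*} [NormedAddCommGroup F]

lemma InLinf.add {f g : ℝ → F} (hf : InLinf f) (hg : InLinf g) : InLinf fun t => f t + g t := by
  obtain ⟨C, hC⟩ := hf
  obtain ⟨D, hD⟩ := hg
  exact ⟨C + D, fun t ht => (norm_add_le _ _).trans (add_le_add (hC t ht) (hD t ht))⟩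

lemma inLinf_const (c : F) : InLinf fun _ : ℝ => c :=
  ⟨‖c‖, fun _ _ => le_rfl⟩

lemma inLinf_of_norm_sq_le {g : ℝ → F} {C : ℝ} (h : ∀ t, 0 ≤ t → ‖g t‖ ^ 2 ≤ C) : InLinf g :=
  ⟨√C, fun t ht => Real.le_sqrt_of_sq_le (h t ht)⟩

lemma inL2_of_integrableOn {g : ℝ → F} (h : IntegrableOn (fun t => ‖g t‖ ^ 2) (Ioi 0)) :
    InL2 g :=
  (h.congr_set_ae Ioi_ae_eq_Ici.symm).setLIntegral_lt_top

end Signals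

lemma integrableOn_Ioi_of_intervalIntegral_le {f : ℝ → ℝ} {a C : ℝ}
    (hcont : ContinuousOn f (Ici a)) (hnonneg : ∀ t, a ≤ t → 0 ≤ f t)
    (hle : ∀ t, a ≤ t → ∫ u in a..t, f u ≤ C) : IntegrableOn f (Ioi a) := by
  refine integrableOn_Ioi_of_intervalIntegral_norm_bounded C a (fun t =>
    (hcont.mono Icc_subset_Ici_self).integrableOn_Icc.mono_set Ioc_subset_Icc_self) tendsto_id ?_
  filter_upwards [eventually_ge_atTop a] with t ht
  refine le_of_eq_of_le (intervalIntegral.integral_congr fun u hu => ?_) (hle t ht)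
  rw [id_eq, uIcc_of_le ht] at hu
  exact Real.norm_of_nonneg (hnonneg u hu.1)

/-- **Barbalat's lemma**. -/
theorem tendsto_zero_of_uniformContinuousOn_of_integrableOn {E : Type*} [NormedAddCommGroup E]
    [NormedSpace ℝ E] [CompleteSpace E] {f : ℝ → E} {a : ℝ}
    (huc : UniformContinuousOn f (Ici a)) (hint : IntegrableOn f (Ioi a)) :
    Tendsto f atTop (𝓝 0) := by
  have hinterval : ∀ t u, a ≤ t → a ≤ u → IntervalIntegrable f volume t u := fun t u ht hu =>
    (((integrableOn_Ici_iff_integrableOn_Ioi).2 hint).mono_set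
      (ordConnected_Ici.uIcc_subset ht hu)).intervalIntegrable
  rw [Metric.tendsto_atTop]
  intro ε hε
  obtain ⟨δ, hδ, hclose⟩ := Metric.uniformContinuousOn_iff.1 huc (ε / 2) (half_pos hε)
  obtain ⟨d, hd0, hdδ⟩ : ∃ d, 0 < d ∧ d < δ := ⟨δ / 2, half_pos hδ, half_lt_self hδ⟩
  have htail : Tendsto (fun t => ∫ u in t..t + d, f u) atTop (𝓝 0) := by
    have hF := intervalIntegral_tendsto_integral_Ioi a hint tendsto_id
    have hdiff := (hF.comp (tendsto_atTop_add_const_right _ d tendsto_id)).sub hF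
    rw [sub_self] at hdiff
    refine hdiff.congr' ?_
    filter_upwards [eventually_ge_atTop a] with t ht
    simp only [Function.comp_apply, id]
    exact intervalIntegral.integral_interval_sub_left (hinterval _ _ le_rfl (by linarith))
      (hinterval _ _ le_rfl ht)
  obtain ⟨N, hN⟩ := Metric.tendsto_atTop.1 htail (d * (ε / 2)) (by positivity)
  refine ⟨max N a, fun t ht => ?_⟩
  have hta : a ≤ t := le_of_max_le_right ht
  have hwindow : ‖d • f t - ∫ u in t..t + d, f u‖ ≤ ε / 2 * d := by
    calc ‖d • f t - ∫ u in t..t + d, f u‖ = ‖∫ u in t..t + d, (f t - f u)‖ := by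
          rw [intervalIntegral.integral_sub intervalIntegrable_const
            (hinterval _ _ hta (by linarith)), intervalIntegral.integral_const, add_sub_cancel_left]
      _ ≤ ε / 2 * |t + d - t| := by
          refine intervalIntegral.norm_integral_le_of_norm_le_const fun u hu => ?_
          rw [uIoc_of_le (by linarith)] at hu
          rw [← dist_eq_norm]
          refine (hclose t hta u (show a ≤ u by linarith [hu.1]) ?_).le
          rw [dist_comm, Real.dist_eq, abs_of_pos (by linarith [hu.1])]
          linarith [hu.2]
      _ = ε / 2 * d := by rw [add_sub_cancel_left, abs_of_pos hd0]
  have hsmall := hN t (le_of_max_le_left ht)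
  rw [dist_zero_right] at hsmall ⊢
  have hnorm : d * ‖f t‖ < d * ε :=
    calc d * ‖f t‖ = ‖d • f t‖ := by rw [norm_smul, Real.norm_of_nonneg hd0.le]
      _ ≤ ‖d • f t - ∫ u in t..t + d, f u‖ + ‖∫ u in t..t + d, f u‖ := norm_le_norm_sub_add _ _
      _ < ε / 2 * d + d * (ε / 2) := add_lt_add_of_le_of_lt hwindow hsmall
      _ = d * ε := by ring
  exact lt_of_mul_lt_mul_left hnorm hd0.le

lemma tendsto_zero_of_hasDerivAt_of_integrableOn_sq {f f' : ℝ → ℝ}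
    (hf : ∀ t, 0 ≤ t → HasDerivAt f (f' t) t) (hfb : InLinf f) (hf'b : InLinf f')
    (hint : IntegrableOn (fun t => f t ^ 2) (Ioi 0)) : Tendsto f atTop (𝓝 0) := by
  obtain ⟨B, hB⟩ := hfb
  obtain ⟨B', hB'⟩ := hf'b
  have hlip : LipschitzOnWith (2 * B * B').toNNReal (fun t => f t ^ 2) (Ici 0) := by
    refine (convex_Ici 0).lipschitzOnWith_of_nnnorm_hasDerivWithin_le
      (fun t ht => ((hf t ht).pow 2).hasDerivWithinAt) fun t ht => ?_
    rw [← NNReal.coe_le_coe, coe_nnnorm, Real.coe_toNNReal']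
    refine le_max_of_le_left ?_
    have := mul_le_mul (hB t ht) (hB' t ht) (norm_nonneg _) ((norm_nonneg _).trans (hB t ht))
    norm_num only [norm_mul, Real.norm_ofNat, pow_one]
    linarith
  have hsq := tendsto_zero_of_uniformContinuousOn_of_integrableOn hlip.uniformContinuousOn hint
  rw [tendsto_zero_iff_abs_tendsto_zero]
  simpa [Function.comp_def, Real.sqrt_sq_eq_abs] using hsq.sqrt

lemma integral_le_sub_of_hasDerivAt_le_neg {V V' g : ℝ → ℝ} {a b : ℝ} (hab : a ≤ b)
    (hV : ∀ t ∈ Icc a b, HasDerivAt V (V' t) t) (hg : ContinuousOn g (Icc a b))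
    (hle : ∀ t ∈ Ioo a b, V' t ≤ -g t) : ∫ t in a..b, g t ≤ V a - V b := by
  have := intervalIntegral.sub_le_integral_of_hasDeriv_right_of_le hab
    (fun t ht => (hV t ht).continuousAt.continuousWithinAt)
    (fun t ht => (hV t (Ioo_subset_Icc_self ht)).hasDerivWithinAt) hg.neg.integrableOn_Icc hle
  simp only [Pi.neg_apply, intervalIntegral.integral_neg] at this
  linarith

lemma integrableOn_Ioi_of_hasDerivAt_le_neg {V V' g : ℝ → ℝ} {a : ℝ}
    (hV : ∀ t, a ≤ t → HasDerivAt V (V' t) t) (hV0 : ∀ t, a ≤ t → 0 ≤ V t)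
    (hg : ContinuousOn g (Ici a)) (hg0 : ∀ t, a ≤ t → 0 ≤ g t)
    (hle : ∀ t, a ≤ t → V' t ≤ -g t) : IntegrableOn g (Ioi a) :=
  integrableOn_Ioi_of_intervalIntegral_le hg hg0 fun t ht =>
    (integral_le_sub_of_hasDerivAt_le_neg ht (fun u hu => hV u hu.1)
      (hg.mono Icc_subset_Ici_self) fun u hu => hle u hu.1.le).trans
      (sub_le_self _ (hV0 t ht))

lemma momentum_dissipation_le {η γ β μ σ q y m : ℝ} (hβμ : 0 < β * μ) (hq : |q| ≤ y * m) :
    -2 * γ * η * σ ^ 2 + 4 * γ * σ * q - 2 * β * (1 + μ * y ^ 2) * m ^ 2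
      ≤ -2 * γ * (η - γ / (β * μ)) * σ ^ 2 - 2 * β * m ^ 2 := by
  have hcross : γ * σ * q ≤ |γ * σ| * (y * m) :=
    (le_abs_self _).trans (by rw [abs_mul]; exact mul_le_mul_of_nonneg_left hq (abs_nonneg _))
  have hyoung : 4 * γ * σ * q ≤ 2 * γ * (γ / (β * μ)) * σ ^ 2 + 2 * (β * μ) * (y * m) ^ 2 := by
    rw [← sub_nonneg]
    have hform : 2 * γ * (γ / (β * μ)) * σ ^ 2 + 2 * (β * μ) * (y * m) ^ 2 - 4 * γ * σ * q
        = (2 * (γ * σ) ^ 2 + 2 * (β * μ) ^ 2 * (y * m) ^ 2 - 4 * (β * μ) * (γ * σ * q))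
          / (β * μ) := by
      obtain ⟨hβ, hμ⟩ := mul_ne_zero_iff.1 hβμ.ne'
      field_simp
    rw [hform]
    refine div_nonneg ?_ hβμ.le
    nlinarith [mul_le_mul_of_nonneg_left hcross hβμ.le, sq_nonneg (|γ * σ| - β * μ * (y * m)),
      sq_abs (γ * σ)]
  linarith

variable {E : Type*} [NormedAddCommGroup E]

def lyapunov (γ : ℝ) (s : ℝ → ℝ) (a : E) (ahat vhat : ℝ → E) (t : ℝ) : ℝ :=
  γ * s t ^ 2 + ‖vhat t - a‖ ^ 2 + ‖ahat t - vhat t‖ ^ 2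

lemma lyapunov_nonneg {γ : ℝ} {s : ℝ → ℝ} {a : E} {ahat vhat : ℝ → E} (hγ : 0 ≤ γ) (t : ℝ) :
    0 ≤ lyapunov γ s a ahat vhat t := by
  unfold lyapunov
  positivity

variable [InnerProductSpace ℝ E]

structure IsMomentumTrajectory (η γ β μ : ℝ) (s : ℝ → ℝ) (Y : ℝ → E) (a : E)
    (ahat vhat : ℝ → E) : Prop where
  hasDerivAt_s : ∀ t, 0 ≤ t → HasDerivAt s (-η * s t + ⟪Y t, ahat t - a⟫) t
  hasDerivAt_vhat : ∀ t, 0 ≤ t → HasDerivAt vhat (-((γ * s t) • Y t)) t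
  hasDerivAt_ahat : ∀ t, 0 ≤ t →
    HasDerivAt ahat ((β * (1 + μ * ‖Y t‖ ^ 2)) • (vhat t - ahat t)) t

namespace IsMomentumTrajectory

variable {η γ β μ : ℝ} {s : ℝ → ℝ} {Y : ℝ → E} {a : E} {ahat vhat : ℝ → E}

lemma hasDerivAt_lyapunov (h : IsMomentumTrajectory η γ β μ s Y a ahat vhat) {t : ℝ}
    (ht : 0 ≤ t) :
    HasDerivAt (lyapunov γ s a ahat vhat)
      (-2 * γ * η * s t ^ 2 + 4 * γ * s t * ⟪Y t, ahat t - vhat t⟫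
        - 2 * β * (1 + μ * ‖Y t‖ ^ 2) * ‖ahat t - vhat t‖ ^ 2) t := by
  have hs := ((h.hasDerivAt_s t ht).pow 2).const_mul γ
  have hv := ((h.hasDerivAt_vhat t ht).sub_const a).norm_sq
  have he := ((h.hasDerivAt_ahat t ht).sub (h.hasDerivAt_vhat t ht)).norm_sq
  refine ((hs.add hv).add he).congr_deriv ?_
  simp only [Pi.sub_apply]
  set e := ahat t - vhat t
  set w := vhat t - a
  have hsplit : ahat t - a = e + w := by simp only [e, w]; abel
  have hneg : vhat t - ahat t = -e := (neg_sub _ _).symm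
  rw [hsplit, hneg]
  simp only [inner_add_right, inner_sub_right, inner_neg_right, real_inner_smul_right,
    real_inner_self_eq_norm_sq, real_inner_comm (Y t)]
  ring

lemma continuousAt_s (h : IsMomentumTrajectory η γ β μ s Y a ahat vhat) {t : ℝ} (ht : 0 ≤ t) :
    ContinuousAt s t :=
  (h.hasDerivAt_s t ht).continuousAt

lemma continuousAt_sub (h : IsMomentumTrajectory η γ β μ s Y a ahat vhat) {t : ℝ} (ht : 0 ≤ t) :
    ContinuousAt (fun t => ahat t - vhat t) t :=
  ((h.hasDerivAt_ahat t ht).sub (h.hasDerivAt_vhat t ht)).continuousAt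

lemma lyapunov_le (h : IsMomentumTrajectory η γ β μ s Y a ahat vhat) (hγ : 0 < γ) (hβ : 0 < β)
    (hμ : 0 < μ) (hκ : 0 < η - γ / (β * μ)) {t : ℝ} (ht : 0 ≤ t) :
    lyapunov γ s a ahat vhat t ≤ lyapunov γ s a ahat vhat 0 := by
  refine antitoneOn_of_hasDerivWithinAt_nonpos (convex_Ici 0)
    (fun t ht => (h.hasDerivAt_lyapunov ht).continuousAt.continuousWithinAt)
    (fun t ht => (h.hasDerivAt_lyapunov (interior_subset ht)).hasDerivWithinAt)
    (fun t _ => (momentum_dissipation_le (by positivity) (abs_real_inner_le_norm _ _)).trans ?_)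
    self_mem_Ici ht ht
  have := mul_pos hγ hκ
  nlinarith [sq_nonneg (s t), sq_nonneg ‖ahat t - vhat t‖]

lemma integrableOn_s_sq (h : IsMomentumTrajectory η γ β μ s Y a ahat vhat) (hγ : 0 < γ)
    (hβ : 0 < β) (hμ : 0 < μ) (hκ : 0 < η - γ / (β * μ)) :
    IntegrableOn (fun t => s t ^ 2) (Ioi 0) := by
  have hc : 0 < 2 * γ * (η - γ / (β * μ)) := by positivity
  refine (integrable_const_mul_iff (isUnit_iff_ne_zero.2 hc.ne') _).1 <|
    integrableOn_Ioi_of_hasDerivAt_le_neg (fun t ht => h.hasDerivAt_lyapunov ht)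
      (fun t _ => lyapunov_nonneg hγ.le t)
      (fun t ht => (((h.continuousAt_s ht).pow 2).const_mul _).continuousWithinAt)
      (fun t _ => by positivity) fun t _ => ?_
  refine (momentum_dissipation_le (by positivity) (abs_real_inner_le_norm _ _)).trans ?_
  nlinarith [sq_nonneg ‖ahat t - vhat t‖]

lemma integrableOn_norm_sub_sq (h : IsMomentumTrajectory η γ β μ s Y a ahat vhat)
    (hγ : 0 < γ) (hβ : 0 < β) (hμ : 0 < μ) (hκ : 0 < η - γ / (β * μ)) :
    IntegrableOn (fun t => ‖ahat t - vhat t‖ ^ 2) (Ioi 0) := by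
  have hc : 0 < 2 * β := by positivity
  refine (integrable_const_mul_iff (isUnit_iff_ne_zero.2 hc.ne') _).1 <|
    integrableOn_Ioi_of_hasDerivAt_le_neg (fun t ht => h.hasDerivAt_lyapunov ht)
      (fun t _ => lyapunov_nonneg hγ.le t)
      (fun t ht => (((h.continuousAt_sub ht).norm.pow 2).const_mul _).continuousWithinAt)
      (fun t _ => by positivity) fun t _ => ?_
  refine (momentum_dissipation_le (by positivity) (abs_real_inner_le_norm _ _)).trans ?_
  have := mul_pos hγ hκ
  nlinarith [sq_nonneg (s t)]

lemma inLinf_s (h : IsMomentumTrajectory η γ β μ s Y a ahat vhat) (hγ : 0 < γ) (hβ : 0 < β)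
    (hμ : 0 < μ) (hκ : 0 < η - γ / (β * μ)) : InLinf s := by
  refine inLinf_of_norm_sq_le (C := lyapunov γ s a ahat vhat 0 / γ) fun t ht => ?_
  have hV := h.lyapunov_le hγ hβ hμ hκ ht
  rw [Real.norm_eq_abs, sq_abs, le_div_iff₀ hγ]
  unfold lyapunov at hV ⊢
  nlinarith [sq_nonneg ‖vhat t - a‖, sq_nonneg ‖ahat t - vhat t‖]

lemma inLinf_vhat (h : IsMomentumTrajectory η γ β μ s Y a ahat vhat) (hγ : 0 < γ) (hβ : 0 < β)
    (hμ : 0 < μ) (hκ : 0 < η - γ / (β * μ)) : InLinf vhat := by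
  have hw : InLinf fun t => vhat t - a :=
    inLinf_of_norm_sq_le (C := lyapunov γ s a ahat vhat 0) fun t ht => by
      have hV := h.lyapunov_le hγ hβ hμ hκ ht
      unfold lyapunov at hV ⊢
      nlinarith [mul_nonneg hγ.le (sq_nonneg (s t)), sq_nonneg ‖ahat t - vhat t‖]
  simpa using hw.add (inLinf_const a)

lemma inLinf_ahat (h : IsMomentumTrajectory η γ β μ s Y a ahat vhat) (hγ : 0 < γ) (hβ : 0 < β)
    (hμ : 0 < μ) (hκ : 0 < η - γ / (β * μ)) : InLinf ahat := by
  have he : InLinf fun t => ahat t - vhat t :=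
    inLinf_of_norm_sq_le (C := lyapunov γ s a ahat vhat 0) fun t ht => by
      have hV := h.lyapunov_le hγ hβ hμ hκ ht
      unfold lyapunov at hV ⊢
      nlinarith [mul_nonneg hγ.le (sq_nonneg (s t)), sq_nonneg ‖vhat t - a‖]
  simpa using he.add (h.inLinf_vhat hγ hβ hμ hκ)

lemma tendsto_s (h : IsMomentumTrajectory η γ β μ s Y a ahat vhat) (hγ : 0 < γ) (hβ : 0 < β)
    (hμ : 0 < μ) (hκ : 0 < η - γ / (β * μ)) (hY : InLinf Y) : Tendsto s atTop (𝓝 0) := by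
  refine tendsto_zero_of_hasDerivAt_of_integrableOn_sq h.hasDerivAt_s (h.inLinf_s hγ hβ hμ hκ)
    ?_ (h.integrableOn_s_sq hγ hβ hμ hκ)
  obtain ⟨S, hS⟩ := h.inLinf_s hγ hβ hμ hκ
  obtain ⟨M, hM⟩ := hY
  obtain ⟨A, hA⟩ := h.inLinf_ahat hγ hβ hμ hκ
  refine ⟨|η| * S + M * (A + ‖a‖), fun t ht => ?_⟩
  calc ‖-η * s t + ⟪Y t, ahat t - a⟫‖ ≤ |η| * ‖s t‖ + ‖Y t‖ * ‖ahat t - a‖ := by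
        refine (norm_add_le _ _).trans (add_le_add ?_ (norm_inner_le_norm _ _))
        rw [norm_mul, norm_neg, Real.norm_eq_abs]
    _ ≤ |η| * S + M * (A + ‖a‖) := by
        gcongr
        · exact hS t ht
        · exact (norm_nonneg _).trans (hM t ht)
        · exact hM t ht
        · exact (norm_sub_le _ _).trans (add_le_add_left (hA t ht) _)

end IsMomentumTrajectory

/-- momentum adaptation law for linearly parameterized dynamics.
The error dynamics `ṡ = -η s + Y(t)ᵀ(â - a)` together with the momentum adaptation law
`v̂̇ = -γ Y(t)ᵀ s`, `â̇ = β 𝒩(t) (v̂ - â)`, `𝒩(t) = 1 + μ ‖Y t‖²`, `μ > γ/(ηβ)`, guarantees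
that all trajectories remain bounded, `s ∈ L∞ ∩ L²`, `(â - v̂) ∈ L²`, `s → 0` and `x → x_d`. -/
theorem momentum_adaptation_linear
    {n p : ℕ}
    (x xd : ℝ → EuclideanSpace ℝ (Fin n))
    (s : ℝ → ℝ)
    (Y : ℝ → EuclideanSpace ℝ (Fin p))
    (a : EuclideanSpace ℝ (Fin p))
    (ahat vhat : ℝ → EuclideanSpace ℝ (Fin p))
    (η γ β μ : ℝ)
    (hη : 0 < η) (hγ : 0 < γ) (hβ : 0 < β)
    (hμ : γ / (η * β) < μ)
    -- error dynamics ṡ = -η s + Y (â - a)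
    (hs : ∀ t, 0 ≤ t → HasDerivAt s (-η * s t + ⟪Y t, ahat t - a⟫) t)
    -- momentum adaptation law
    (hv : ∀ t, 0 ≤ t → HasDerivAt vhat (-((γ * s t) • Y t)) t)
    (ha : ∀ t, 0 ≤ t →
      HasDerivAt ahat ((β * (1 + μ * ‖Y t‖ ^ 2)) • (vhat t - ahat t)) t)
    -- the regressor Y(x, t) is locally bounded in x uniformly in t
    (hYloc : ∀ R : ℝ, ∃ M : ℝ, ∀ t, 0 ≤ t → ‖x t‖ ≤ R → ‖Y t‖ ≤ M)
    -- boundedness of s implies boundedness of x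
    (hsx : InLinf s → InLinf x)
    -- s → 0 implies x → x_d
    (hxd : Tendsto s atTop (nhds 0) →
      Tendsto (fun t => x t - xd t) atTop (nhds 0)) :
    InLinf x ∧ InLinf vhat ∧ InLinf ahat ∧
    (InLinf s ∧ InL2 s) ∧
    InL2 (fun t => ahat t - vhat t) ∧
    Tendsto s atTop (nhds 0) ∧
    Tendsto (fun t => x t - xd t) atTop (nhds 0) := by
  have hμ0 : 0 < μ := (div_pos hγ (mul_pos hη hβ)).trans hμ
  have hκ : 0 < η - γ / (β * μ) := by
    rw [div_lt_iff₀ (mul_pos hη hβ)] at hμ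
    rw [sub_pos, div_lt_iff₀ (mul_pos hβ hμ0)]
    linarith
  have h : IsMomentumTrajectory η γ β μ s Y a ahat vhat := ⟨hs, hv, ha⟩
  have hsb := h.inLinf_s hγ hβ hμ0 hκ
  obtain ⟨R, hR⟩ := hsx hsb
  obtain ⟨M, hM⟩ := hYloc R
  have hs0 := h.tendsto_s hγ hβ hμ0 hκ ⟨M, fun t ht => hM t ht (hR t ht)⟩
  refine ⟨⟨R, hR⟩, h.inLinf_vhat hγ hβ hμ0 hκ, h.inLinf_ahat hγ hβ hμ0 hκ, ⟨hsb, ?_⟩,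
    inL2_of_integrableOn (h.integrableOn_norm_sub_sq hγ hβ hμ0 hκ), hs0, hxd hs0⟩
  exact inL2_of_integrableOn <| by
    simpa only [Real.norm_eq_abs, sq_abs] using h.integrableOn_s_sq hγ hβ hμ0 hκ
end
end

section
/- Consider the error dynamics ṡ = −η s + f̃ with η > 0 under the monotonicity assumption (with function α(x, t) and constant D₁ > 0), together with the elastic adaptation law â̇ = −f̃ P α(x(t), t) + k(ā − â), ā̇ = k(â − ā), where P = Pᵀ > 0 and k > 0. Then all trajectories (x, â, ā) remain bounded, f̃ ∈ L² ∩ L∞, (â − ā) ∈ L², s ∈ L∞ ∩ L², s(t) → 0 as t → ∞, and x(t) → x_d(t). -/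
/-!
With `Q = P⁻¹`, the parameter energy `V = ⟪â - a, Q (â - a)⟫ + ⟪ā - a, Q (ā - a)⟫` of the elastic
law satisfies `V̇ = -2 (f̃ ⟪â - a, α⟫ + k ⟪â - ā, Q (â - ā)⟫)`, and the monotonicity assumption
gives `f̃ ⟪â - a, α⟫ ≥ f̃² / D₁`. Hence `U = η s² + D₁ V` satisfies
`U̇ ≤ -(η² s² + f̃² + 2 D₁ k c ‖â - ā‖²)`, where `c` is a coercivity constant of `Q`.
So `U` is nonincreasing, which bounds `s`, `â`, `ā`, and `U̇` is integrable on `[0, ∞)`, which puts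
`s`, `f̃`, `â - ā` in `L²`. Finally `U` and `V` converge, hence so does `s² = (U - D₁ V) / η`, and
its limit vanishes because `s ∈ L²`.
-/

open MeasureTheory Filter
open scoped RealInnerProductSpace ENNReal

noncomputable section

open Set

theorem antitoneOn_Ici_of_hasDerivAt_nonpos {U U' : ℝ → ℝ}
    (hU : ∀ t, 0 ≤ t → HasDerivAt U (U' t) t) (hU' : ∀ t, 0 ≤ t → U' t ≤ 0) :
    AntitoneOn U (Ici 0) :=
  antitoneOn_of_hasDerivWithinAt_nonpos (convex_Ici 0)
    (fun t ht => (hU t ht).continuousAt.continuousWithinAt)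
    (fun t ht => (hU t (interior_subset ht)).hasDerivWithinAt)
    (fun t ht => hU' t (interior_subset ht))

theorem exists_tendsto_of_hasDerivAt_nonpos {U U' : ℝ → ℝ}
    (hU : ∀ t, 0 ≤ t → HasDerivAt U (U' t) t) (hU' : ∀ t, 0 ≤ t → U' t ≤ 0)
    (hU₀ : ∀ t, 0 ≤ t → 0 ≤ U t) : ∃ l, Tendsto U atTop (nhds l) := by
  have hanti : Antitone fun t => U (max t 0) := fun t u htu =>
    antitoneOn_Ici_of_hasDerivAt_nonpos hU hU' (le_max_right t 0) (le_max_right u 0)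
      (max_le_max_right 0 htu)
  refine ⟨_, (tendsto_atTop_ciInf hanti ⟨0, ?_⟩).congr' ?_⟩
  · rintro _ ⟨t, rfl⟩
    exact hU₀ _ (le_max_right t 0)
  · filter_upwards [eventually_ge_atTop 0] with t ht
    rw [max_eq_left ht]

theorem integrableOn_Ioi_of_hasDerivAt_nonpos {U U' : ℝ → ℝ}
    (hU : ∀ t, 0 ≤ t → HasDerivAt U (U' t) t) (hU' : ∀ t, 0 ≤ t → U' t ≤ 0)
    (hU₀ : ∀ t, 0 ≤ t → 0 ≤ U t) : IntegrableOn U' (Ioi 0) := by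
  obtain ⟨l, hl⟩ := exists_tendsto_of_hasDerivAt_nonpos hU hU' hU₀
  exact integrableOn_Ioi_deriv_of_nonpos' hU (fun t ht => hU' t (le_of_lt ht)) hl

theorem InL2.of_sq_norm_le {F : Type*} [NormedAddCommGroup F] {u : ℝ → F} {g : ℝ → ℝ}
    (hg : IntegrableOn g (Ioi 0)) (hle : ∀ t, 0 ≤ t → ‖u t‖ ^ 2 ≤ g t) : InL2 u := by
  unfold InL2
  rw [Measure.restrict_congr_set Ioi_ae_eq_Ici.symm]
  calc ∫⁻ t in Ioi 0, ENNReal.ofReal (‖u t‖ ^ 2)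
      ≤ ∫⁻ t in Ioi 0, ENNReal.ofReal (g t) :=
        setLIntegral_mono' measurableSet_Ioi fun t ht =>
          ENNReal.ofReal_le_ofReal (hle t (le_of_lt ht))
    _ < ⊤ := hg.lintegral_lt_top

theorem InLinf.of_sq_norm_le {F : Type*} [NormedAddCommGroup F] {u : ℝ → F} {B : ℝ}
    (hle : ∀ t, 0 ≤ t → ‖u t‖ ^ 2 ≤ B) : InLinf u :=
  ⟨√B, fun t ht => Real.le_sqrt_of_sq_le (hle t ht)⟩

theorem InLinf.of_sub_const {F : Type*} [NormedAddCommGroup F] {u : ℝ → F} {a : F}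
    (hu : InLinf fun t => u t - a) : InLinf u := by
  obtain ⟨C, hC⟩ := hu
  exact ⟨C + ‖a‖, fun t ht => (norm_le_norm_sub_add (u t) a).trans (by linarith [hC t ht])⟩

theorem InL2.tendsto_zero_of_tendsto_sq_norm {F : Type*} [NormedAddCommGroup F] {u : ℝ → F}
    {L : ℝ} (hu : InL2 u) (hL : Tendsto (fun t => ‖u t‖ ^ 2) atTop (nhds L)) :
    Tendsto u atTop (nhds 0) := by
  have hL0 : L = 0 := by
    by_contra hne
    have hpos : 0 < L := lt_of_le_of_ne (ge_of_tendsto' hL fun t => by positivity) (Ne.symm hne)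
    obtain ⟨T, hT⟩ := eventually_atTop.1 (hL.eventually (lt_mem_nhds (half_lt_self hpos)))
    refine (hu.trans_le' ?_).ne (ENNReal.mul_top (ENNReal.ofReal_pos.2 (half_pos hpos)).ne')
    calc ENNReal.ofReal (L / 2) * ⊤ = ∫⁻ _ in Ici (max T 0), ENNReal.ofReal (L / 2) := by
          rw [setLIntegral_const, Real.volume_Ici]
      _ ≤ ∫⁻ t in Ici (max T 0), ENNReal.ofReal (‖u t‖ ^ 2) :=
          setLIntegral_mono' measurableSet_Ici fun t ht =>
            ENNReal.ofReal_le_ofReal (hT t (le_of_max_le_left ht)).le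
      _ ≤ ∫⁻ t in Ici 0, ENNReal.ofReal (‖u t‖ ^ 2) :=
          lintegral_mono_set (Ici_subset_Ici.2 (le_max_right T 0))
  rw [hL0] at hL
  have := hL.sqrt
  simp only [Real.sqrt_sq (norm_nonneg _), Real.sqrt_zero] at this
  exact tendsto_zero_iff_norm_tendsto_zero.2 this

theorem InL2.of_sq_norm_le_neg_deriv {F : Type*} [NormedAddCommGroup F] {u : ℝ → F}
    {U U' : ℝ → ℝ} {C : ℝ} (hU : ∀ t, 0 ≤ t → HasDerivAt U (U' t) t)
    (hU' : ∀ t, 0 ≤ t → U' t ≤ 0) (hU₀ : ∀ t, 0 ≤ t → 0 ≤ U t) (hC : 0 < C)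
    (hle : ∀ t, 0 ≤ t → C * ‖u t‖ ^ 2 ≤ -U' t) : InL2 u :=
  InL2.of_sq_norm_le ((integrableOn_Ioi_of_hasDerivAt_nonpos hU hU' hU₀).neg.div_const C)
    fun t ht => (le_div_iff₀' hC).2 (hle t ht)

theorem InLinf.apply_of_bounded {X Y : Type*} [NormedAddCommGroup X] [NormedAddCommGroup Y]
    {F : X → Y → ℝ → ℝ}
    (hF : ∀ R : ℝ, ∃ M : ℝ, ∀ ξ b t, 0 ≤ t → ‖ξ‖ ≤ R → ‖b‖ ≤ R → |F ξ b t| ≤ M)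
    {x : ℝ → X} {y : ℝ → Y} (hx : InLinf x) (hy : InLinf y) :
    InLinf fun t => F (x t) (y t) t := by
  obtain ⟨Cx, hCx⟩ := hx
  obtain ⟨Cy, hCy⟩ := hy
  obtain ⟨M, hM⟩ := hF (max Cx Cy)
  exact ⟨M, fun t ht => hM _ _ t ht ((hCx t ht).trans (le_max_left _ _))
    ((hCy t ht).trans (le_max_right _ _))⟩

section InnerProductSpace

variable {E : Type*} [NormedAddCommGroup E] [InnerProductSpace ℝ E]

theorem exists_pos_mul_sq_norm_le_inner_self [FiniteDimensional ℝ E] (T : E →L[ℝ] E)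
    (hT : ∀ v, v ≠ 0 → 0 < ⟪v, T v⟫) : ∃ c, 0 < c ∧ ∀ v, c * ‖v‖ ^ 2 ≤ ⟪v, T v⟫ := by
  rcases subsingleton_or_nontrivial E with hE | hE
  · exact ⟨1, one_pos, fun v => by simp [Subsingleton.elim v 0]⟩
  obtain ⟨u, hu, hmin⟩ := (isCompact_sphere (0 : E) 1).exists_isMinOn
    (NormedSpace.sphere_nonempty.2 zero_le_one)
    (continuous_id.inner (𝕜 := ℝ) T.continuous).continuousOn
  have hu₀ : u ≠ 0 := ne_zero_of_mem_unit_sphere ⟨u, hu⟩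
  refine ⟨⟪u, T u⟫, hT u hu₀, fun v => ?_⟩
  rcases eq_or_ne v 0 with rfl | hv
  · simp
  have hv' : 0 < ‖v‖ := norm_pos_iff.2 hv
  have h : ⟪u, T u⟫ ≤ ⟪‖v‖⁻¹ • v, T (‖v‖⁻¹ • v)⟫ := hmin (by simp [norm_smul, hv'.ne'])
  rw [map_smul, real_inner_smul_left, real_inner_smul_right] at h
  exact (le_div_iff₀ (by positivity)).1 (h.trans_eq (by field_simp))

theorem exists_symm_inverse_of_inner_self_pos [FiniteDimensional ℝ E] (P : E →L[ℝ] E)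
    (hP : ∀ v w, ⟪P v, w⟫ = ⟪v, P w⟫) (hPpos : ∀ v, v ≠ 0 → 0 < ⟪v, P v⟫) :
    ∃ Q : E →L[ℝ] E, (∀ v, Q (P v) = v) ∧ (∀ v w, ⟪Q v, w⟫ = ⟪v, Q w⟫) ∧
      ∀ v, v ≠ 0 → 0 < ⟪v, Q v⟫ := by
  have hinj : Function.Injective P := (injective_iff_map_eq_zero P).2 fun v hv =>
    by_contra fun hne => (hPpos v hne).ne' (by simp [hv])
  let e := (LinearEquiv.ofInjectiveEndo (P : E →ₗ[ℝ] E) hinj).toContinuousLinearEquiv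
  have hPQ : ∀ v, P (e.symm v) = v := e.apply_symm_apply
  refine ⟨e.symm, e.symm_apply_apply, fun v w => ?_, fun v hv => ?_⟩
  · calc ⟪e.symm v, w⟫ = ⟪e.symm v, P (e.symm w)⟫ := by rw [hPQ]
      _ = ⟪v, e.symm w⟫ := by rw [← hP, hPQ]
  · have := hPpos (e.symm v) (by simpa using hv)
    rwa [hPQ, real_inner_comm] at this

theorem HasDerivAt.inner_apply_self {Q : E →L[ℝ] E} (hQ : ∀ v w, ⟪Q v, w⟫ = ⟪v, Q w⟫)
    {u : ℝ → E} {u' : E} {t : ℝ} (hu : HasDerivAt u u' t) :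
    HasDerivAt (fun τ => ⟪u τ, Q (u τ)⟫) (2 * ⟪u t, Q u'⟫) t := by
  refine (hu.inner ℝ (Q.hasFDerivAt.comp_hasDerivAt t hu)).congr_deriv ?_
  rw [Function.comp_apply, ← hQ, real_inner_comm]
  ring

end InnerProductSpace

theorem sq_le_mul_mul_of_nonneg_of_abs_le {φ y D : ℝ} (hD : 0 < D) (h₁ : 0 ≤ y * φ)
    (h₂ : 1 / D * |φ| ≤ |y|) : φ ^ 2 ≤ D * (φ * y) := by
  rw [div_mul_eq_mul_div, one_mul, div_le_iff₀ hD] at h₂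
  calc φ ^ 2 = |φ| * |φ| := by rw [abs_mul_abs_self, sq]
    _ ≤ (|y| * D) * |φ| := by gcongr
    _ = D * |y * φ| := by rw [abs_mul]; ring
    _ = D * (φ * y) := by rw [abs_of_nonneg h₁, mul_comm y]

theorem hasDerivAt_mul_sq_add_le {s V : ℝ → ℝ} {η D φ V' r t : ℝ}
    (hs : HasDerivAt s (-η * s t + φ) t) (hV : HasDerivAt V V' t)
    (hle : 2 * (φ ^ 2 + r) ≤ -(D * V')) :
    HasDerivAt (fun τ => η * s τ ^ 2 + D * V τ) (deriv (fun τ => η * s τ ^ 2 + D * V τ) t) t ∧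
      η ^ 2 * s t ^ 2 + φ ^ 2 + 2 * r ≤ -deriv (fun τ => η * s τ ^ 2 + D * V τ) t := by
  have hU : HasDerivAt (fun τ => η * s τ ^ 2 + D * V τ)
      (2 * η * s t * (-η * s t + φ) + D * V') t :=
    ((hs.pow 2).const_mul η).add (hV.const_mul D) |>.congr_deriv (by norm_num; ring)
  rw [hU.deriv]
  exact ⟨hU, by nlinarith [sq_nonneg (η * s t - φ)]⟩

section ElasticAdaptation

variable {E : Type*} [NormedAddCommGroup E] [InnerProductSpace ℝ E] {P Q : E →L[ℝ] E} {a : E}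
  {k c : ℝ} {ahat abar : ℝ → E}

def elasticEnergy (Q : E →L[ℝ] E) (a : E) (ahat abar : ℝ → E) (t : ℝ) : ℝ :=
  ⟪ahat t - a, Q (ahat t - a)⟫ + ⟪abar t - a, Q (abar t - a)⟫

theorem hasDerivAt_elasticEnergy (hQ : ∀ v w, ⟪Q v, w⟫ = ⟪v, Q w⟫) (hQP : ∀ v, Q (P v) = v)
    {φ t : ℝ} {β : E} (ha : HasDerivAt ahat (-(P (φ • β)) + k • (abar t - ahat t)) t)
    (hb : HasDerivAt abar (k • (ahat t - abar t)) t) :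
    HasDerivAt (elasticEnergy Q a ahat abar)
      (-2 * (φ * ⟪ahat t - a, β⟫ + k * ⟪ahat t - abar t, Q (ahat t - abar t)⟫)) t := by
  refine (((ha.sub_const a).inner_apply_self hQ).add
    ((hb.sub_const a).inner_apply_self hQ)).congr_deriv ?_
  rw [← sub_sub_sub_cancel_right (abar t) (ahat t) a,
    ← sub_sub_sub_cancel_right (ahat t) (abar t) a]
  simp only [map_add, map_neg, map_smul, map_sub, hQP, inner_add_right, inner_neg_right,
    real_inner_smul_right, inner_sub_right, inner_sub_left]
  ring

theorem elasticEnergy_dissipation {D φ t : ℝ} {β : E} (hk : 0 < k) (hD : 0 < D)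
    (hQ : ∀ v w, ⟪Q v, w⟫ = ⟪v, Q w⟫) (hQP : ∀ v, Q (P v) = v)
    (hQc : ∀ v, c * ‖v‖ ^ 2 ≤ ⟪v, Q v⟫) (hφ : φ ^ 2 ≤ D * (φ * ⟪ahat t - a, β⟫))
    (ha : HasDerivAt ahat (-(P (φ • β)) + k • (abar t - ahat t)) t)
    (hb : HasDerivAt abar (k • (ahat t - abar t)) t) :
    HasDerivAt (elasticEnergy Q a ahat abar) (deriv (elasticEnergy Q a ahat abar) t) t ∧
      2 * (φ ^ 2 + D * k * c * ‖ahat t - abar t‖ ^ 2) ≤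
        -(D * deriv (elasticEnergy Q a ahat abar) t) := by
  have hV := hasDerivAt_elasticEnergy (a := a) hQ hQP ha hb
  rw [hV.deriv]
  have := mul_le_mul_of_nonneg_left (hQc (ahat t - abar t)) (mul_pos hD hk).le
  exact ⟨hV, by linarith⟩

theorem InLinf.of_elasticEnergy_le (hc : 0 < c) (hQc : ∀ v, c * ‖v‖ ^ 2 ≤ ⟪v, Q v⟫) {B : ℝ}
    (hV : ∀ t, 0 ≤ t → elasticEnergy Q a ahat abar t ≤ B) : InLinf ahat ∧ InLinf abar := by
  have hle : ∀ t, 0 ≤ t → ‖ahat t - a‖ ^ 2 + ‖abar t - a‖ ^ 2 ≤ B / c := fun t ht => by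
    rw [le_div_iff₀' hc, mul_add]
    exact (add_le_add (hQc _) (hQc _)).trans (hV t ht)
  exact ⟨(InLinf.of_sq_norm_le fun t ht =>
      (le_add_of_nonneg_right (sq_nonneg _)).trans (hle t ht)).of_sub_const,
    (InLinf.of_sq_norm_le fun t ht =>
      (le_add_of_nonneg_left (sq_nonneg _)).trans (hle t ht)).of_sub_const⟩

theorem elastic_closed_loop {η D : ℝ} {s φ : ℝ → ℝ} {β : ℝ → E}
    (hη : 0 < η) (hk : 0 < k) (hD : 0 < D) (hc : 0 < c)
    (hQ : ∀ v w, ⟪Q v, w⟫ = ⟪v, Q w⟫) (hQP : ∀ v, Q (P v) = v)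
    (hQc : ∀ v, c * ‖v‖ ^ 2 ≤ ⟪v, Q v⟫)
    (hφ : ∀ t, 0 ≤ t → φ t ^ 2 ≤ D * (φ t * ⟪ahat t - a, β t⟫))
    (hs : ∀ t, 0 ≤ t → HasDerivAt s (-η * s t + φ t) t)
    (ha : ∀ t, 0 ≤ t → HasDerivAt ahat (-(P (φ t • β t)) + k • (abar t - ahat t)) t)
    (hb : ∀ t, 0 ≤ t → HasDerivAt abar (k • (ahat t - abar t)) t) :
    InLinf s ∧ InL2 s ∧ InLinf ahat ∧ InLinf abar ∧ InL2 φ ∧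
      InL2 (fun t => ahat t - abar t) ∧ Tendsto s atTop (nhds 0) := by
  set V := elasticEnergy Q a ahat abar
  set U := fun t => η * s t ^ 2 + D * V t
  set r := fun t => D * k * c * ‖ahat t - abar t‖ ^ 2
  have hr₀ : ∀ t, 0 ≤ r t := fun t => by positivity
  have hV₀ : ∀ t, 0 ≤ V t := fun t => add_nonneg
    ((by positivity : 0 ≤ c * _).trans (hQc _)) ((by positivity : 0 ≤ c * _).trans (hQc _))
  have hV : ∀ t, 0 ≤ t →
      HasDerivAt V (deriv V t) t ∧ 2 * (φ t ^ 2 + r t) ≤ -(D * deriv V t) := fun t ht =>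
    elasticEnergy_dissipation hk hD hQ hQP hQc (hφ t ht) (ha t ht) (hb t ht)
  have hU : ∀ t, 0 ≤ t →
      HasDerivAt U (deriv U t) t ∧ η ^ 2 * s t ^ 2 + φ t ^ 2 + 2 * r t ≤ -deriv U t :=
    fun t ht => hasDerivAt_mul_sq_add_le (hs t ht) (hV t ht).1 (hV t ht).2
  have hU'₀ : ∀ t, 0 ≤ t → deriv U t ≤ 0 := fun t ht => by
    linarith [(hU t ht).2, hr₀ t, sq_nonneg (η * s t), sq_nonneg (φ t)]
  have hU₀ : ∀ t, 0 ≤ t → 0 ≤ U t := fun t _ =>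
    add_nonneg (by positivity) (mul_nonneg hD.le (hV₀ t))
  have hUmax : ∀ t, 0 ≤ t → U t ≤ U 0 := fun t ht =>
    antitoneOn_Ici_of_hasDerivAt_nonpos (fun t ht => (hU t ht).1) hU'₀ self_mem_Ici ht ht
  have hnorm_sq : ∀ x : ℝ, ‖x‖ ^ 2 = x ^ 2 := fun x => by rw [Real.norm_eq_abs, sq_abs]
  have hL2 {u : ℝ → ℝ} {C : ℝ} (hC : 0 < C) (hle : ∀ t, 0 ≤ t → C * u t ^ 2 ≤ -deriv U t) :
      InL2 u := InL2.of_sq_norm_le_neg_deriv (fun t ht => (hU t ht).1) hU'₀ hU₀ hC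
        fun t ht => hnorm_sq (u t) ▸ hle t ht
  have hsL2 : InL2 s := hL2 (pow_pos hη 2) fun t ht => by
    linarith [(hU t ht).2, hr₀ t, sq_nonneg (φ t)]
  obtain ⟨l₁, hl₁⟩ := exists_tendsto_of_hasDerivAt_nonpos (fun t ht => (hU t ht).1) hU'₀ hU₀
  obtain ⟨l₂, hl₂⟩ := exists_tendsto_of_hasDerivAt_nonpos (fun t ht => (hV t ht).1)
    (fun t ht => by nlinarith [(hV t ht).2, sq_nonneg (φ t), hr₀ t]) fun t _ => hV₀ t
  obtain ⟨hahat, habar⟩ := InLinf.of_elasticEnergy_le hc hQc (B := U 0 / D) fun t ht => by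
    rw [le_div_iff₀' hD]
    linarith [hUmax t ht, mul_nonneg hη.le (sq_nonneg (s t))]
  refine ⟨InLinf.of_sq_norm_le (B := U 0 / η) fun t ht => ?_, hsL2, hahat, habar,
    hL2 one_pos fun t ht => by linarith [(hU t ht).2, sq_nonneg (η * s t), hr₀ t],
    InL2.of_sq_norm_le_neg_deriv (C := 2 * (D * k * c)) (fun t ht => (hU t ht).1) hU'₀ hU₀
      (by positivity) fun t ht => by linarith [(hU t ht).2, sq_nonneg (η * s t), sq_nonneg (φ t)],
    hsL2.tendsto_zero_of_tendsto_sq_norm (((hl₁.sub (hl₂.const_mul D)).div_const η).congr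
      fun t => ?_)⟩
  · rw [hnorm_sq, le_div_iff₀' hη]
    linarith [hUmax t ht, mul_nonneg hD.le (hV₀ t)]
  · rw [hnorm_sq]
    field_simp
    ring

end ElasticAdaptation

/-- elastic adaptation law for nonlinearly parameterized dynamics
under the monotonicity assumption. -/
theorem elastic_adaptation_nonlinear
    {n p : ℕ}
    (x xd : ℝ → EuclideanSpace ℝ (Fin n))
    (s : ℝ → ℝ)
    (f : EuclideanSpace ℝ (Fin n) → EuclideanSpace ℝ (Fin p) → ℝ → ℝ)
    (α : EuclideanSpace ℝ (Fin n) → ℝ → EuclideanSpace ℝ (Fin p))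
    (a : EuclideanSpace ℝ (Fin p))
    (ahat abar : ℝ → EuclideanSpace ℝ (Fin p))
    (P : EuclideanSpace ℝ (Fin p) →L[ℝ] EuclideanSpace ℝ (Fin p))
    (η k D₁ : ℝ)
    (hη : 0 < η) (hk : 0 < k) (hD₁ : 0 < D₁)
    -- P is symmetric positive definite
    (hPsym : ∀ v w : EuclideanSpace ℝ (Fin p), ⟪P v, w⟫ = ⟪v, P w⟫)
    (hPpos : ∀ v : EuclideanSpace ℝ (Fin p), v ≠ 0 → 0 < ⟪v, P v⟫)
    -- monotonicity assumption
    (hmono₁ : ∀ (b : EuclideanSpace ℝ (Fin p)) (ξ : EuclideanSpace ℝ (Fin n)) (t : ℝ),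
      0 ≤ t → 0 ≤ ⟪b - a, α ξ t⟫ * (f ξ b t - f ξ a t))
    (hmono₂ : ∀ (b : EuclideanSpace ℝ (Fin p)) (ξ : EuclideanSpace ℝ (Fin n)) (t : ℝ),
      0 ≤ t → (1 / D₁) * |f ξ b t - f ξ a t| ≤ |⟪α ξ t, b - a⟫|)
    -- error dynamics ṡ = -η s + f̃
    (hs : ∀ t, 0 ≤ t →
      HasDerivAt s (-η * s t + (f (x t) (ahat t) t - f (x t) a t)) t)
    -- elastic adaptation law
    (ha : ∀ t, 0 ≤ t →
      HasDerivAt ahat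
        (-(P ((f (x t) (ahat t) t - f (x t) a t) • α (x t) t)) +
          k • (abar t - ahat t)) t)
    (hb : ∀ t, 0 ≤ t → HasDerivAt abar (k • (ahat t - abar t)) t)
    -- f̃ is locally bounded in (x, â) uniformly in t
    (hfloc : ∀ R : ℝ, ∃ M : ℝ,
      ∀ (ξ : EuclideanSpace ℝ (Fin n)) (b : EuclideanSpace ℝ (Fin p)) (t : ℝ),
        0 ≤ t → ‖ξ‖ ≤ R → ‖b‖ ≤ R → |f ξ b t - f ξ a t| ≤ M)
    -- boundedness of s implies boundedness of x
    (hsx : InLinf s → InLinf x)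
    -- s → 0 implies x → x_d
    (hxd : Tendsto s atTop (nhds 0) →
      Tendsto (fun t => x t - xd t) atTop (nhds 0)) :
    InLinf x ∧ InLinf ahat ∧ InLinf abar ∧
    (InL2 (fun t => f (x t) (ahat t) t - f (x t) a t) ∧
      InLinf (fun t => f (x t) (ahat t) t - f (x t) a t)) ∧
    InL2 (fun t => ahat t - abar t) ∧
    (InLinf s ∧ InL2 s) ∧
    Tendsto s atTop (nhds 0) ∧
    Tendsto (fun t => x t - xd t) atTop (nhds 0) := by
  set φ := fun t => f (x t) (ahat t) t - f (x t) a t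
  obtain ⟨Q, hQP, hQ, hQpos⟩ := exists_symm_inverse_of_inner_self_pos P hPsym hPpos
  obtain ⟨c, hc, hQc⟩ := exists_pos_mul_sq_norm_le_inner_self Q hQpos
  have hφ : ∀ t, 0 ≤ t → φ t ^ 2 ≤ D₁ * (φ t * ⟪ahat t - a, α (x t) t⟫) := fun t ht =>
    sq_le_mul_mul_of_nonneg_of_abs_le hD₁ (hmono₁ _ _ t ht)
      (by rw [real_inner_comm]; exact hmono₂ _ _ t ht)
  obtain ⟨hsb, hsL2, hab, hbb, hφL2, hdL2, hs0⟩ :=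
    elastic_closed_loop hη hk hD₁ hc hQ hQP hQc hφ hs ha hb
  have hxb := hsx hsb
  exact ⟨hxb, hab, hbb,
    ⟨hφL2, InLinf.apply_of_bounded (F := fun ξ b t => f ξ b t - f ξ a t) hfloc hxb hab⟩,
    hdL2, ⟨hsb, hsL2⟩, hs0, hxd hs0⟩

end
end
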